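/- arXiv:1309.3292 — 5 statements merged into one kernel-verified Lean document; each statement's English description precedes it below -/
import Mathlib

section
/- Let R be a finite Frobenius ring, i.e., a finite ring admitting a generating character: an additive character χ : (R,+) → ℂ^× such that r ↦ (x ↦ χ(rx)) is a bijection from R onto the group of additive characters of R. Let w : R → ℚ be a weight with G_rt(w) = R^× (w is right-invariant), and suppose there exists a function f : R → ℚ with (wf)(x) = ∑_{r ∈ R} w(rx)·f(r) = w_H(x) for all x ∈ R, where w_H is the Hamming weight. Then (R, w) satisfies the Extension Property. -/
/-!
Since `w` correlates to the Hamming weight, a `w`-isometry `φ : C → Rⁿ` preserves Hamming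
weights, so the coordinate functionals `xᵢ` of `C` and `yᵢ = xᵢ ∘ φ` vanish at every `c ∈ C`
equally often. Summing a generating character `χ` over right multiples turns this into an identity
`∑ᵢ,ₛ χ ∘ (xᵢ s) = ∑ᵢ,ₛ χ ∘ (yᵢ s)` of additive characters of `C`; by linear independence of
characters, every functional `α` is a right multiple `xᵢ s` exactly as often as it is a right
multiple `yᵢ s`. Peeling off a functional whose cyclic right submodule is maximal matches the
`xᵢ` with the `yᵢ` up to a permutation, pairing functionals that generate the same cyclic module.
Over a finite ring two such generators differ by a unit, because a finite ring has stable range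
one: this follows from the Fitting decomposition together with cancellation of finite modules,
which is proved by counting homomorphisms.
-/

/-- A finite ring is Frobenius if it admits a generating character: an additive
character `χ : (R,+) → ℂ^×` such that `r ↦ (x ↦ χ(rx))` is a bijection from `R`
onto the group of additive characters of `R`. -/
def IsFrobenius (R : Type) [Ring R] : Prop :=
  ∃ χ : AddChar R ℂ, ∀ ψ : AddChar R ℂ, ∃! r : R, ∀ x : R, ψ x = χ (r * x)

/-- `(R, w)` satisfies the Extension Property: for every `n`, every linear code
`C ≤ ᴿRⁿ` and every injective `w`-isometry `φ : C → Rⁿ` (with `w` extended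
additively to `Rⁿ`), `φ` is the restriction of a `G_rt(w)`-monomial
transformation `(x_1,…,x_n) ↦ (x_{π(1)}u_1,…,x_{π(n)}u_n)` of `Rⁿ`. -/
def ExtensionProperty (R : Type) [Ring R] (w : R → ℚ) : Prop :=
  ∀ (n : ℕ) (C : Submodule R (Fin n → R)) (φ : C →ₗ[R] (Fin n → R)),
    Function.Injective φ →
    (∀ c : C, ∑ i, w (φ c i) = ∑ i, w ((c : Fin n → R) i)) →
    ∃ (π : Equiv.Perm (Fin n)) (u : Fin n → Rˣ),
      (∀ i, ∀ x : R, w (x * (u i : R)) = w x) ∧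
      ∀ c : C, ∀ i, φ c i = (c : Fin n → R) (π i) * (u i : R)

open Function Finset MulOpposite

universe u v

section Cancellation

variable {T : Type u} [Ring T] {X A B : Type v} [AddCommGroup X] [Module T X]
  [AddCommGroup A] [Module T A] [AddCommGroup B] [Module T B]

instance [Finite X] [Finite A] : Finite (X →ₗ[T] A) := DFunLike.finite _

instance [Finite X] (W : Submodule T X) : Finite (X ⧸ W) := Finite.of_surjective _ W.mkQ_surjective

def linearMapEquivSigmaInjective :
    (X →ₗ[T] A) ≃ Σ W : Submodule T X, {g : X ⧸ W →ₗ[T] A // Injective g} :=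
  (Equiv.sigmaFiberEquiv LinearMap.ker).symm.trans <| Equiv.sigmaCongrRight fun W =>
    { toFun f := ⟨W.liftQ f.1 f.2.ge, LinearMap.ker_eq_bot.mp (W.ker_liftQ_eq_bot _ _ f.2.le)⟩
      invFun g := ⟨g.1.comp W.mkQ, by
        rw [LinearMap.ker_comp, LinearMap.ker_eq_bot.mpr g.2, Submodule.comap_bot, W.ker_mkQ]⟩
      left_inv f := Subtype.ext (W.liftQ_mkQ _ _)
      right_inv g := Subtype.ext (W.linearMap_qext rfl) }

lemma card_injective_linearMap_congr_left {X' : Type v} [AddCommGroup X'] [Module T X']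
    (e : X ≃ₗ[T] X') :
    Nat.card {g : X →ₗ[T] A // Injective g} = Nat.card {g : X' →ₗ[T] A // Injective g} :=
  Nat.card_congr <| (e.arrowCongrAddEquiv (LinearEquiv.refl T A)).toEquiv.subtypeEquiv
    fun g => by simp [EquivLike.injective_comp]

lemma Submodule.card_quotient_lt_of_ne_bot [Finite X] {W : Submodule T X} (hW : W ≠ ⊥) :
    Nat.card (X ⧸ W) < Nat.card X := by
  obtain ⟨x, hxW, hx0⟩ := W.ne_bot_iff.mp hW
  have := Fintype.ofFinite X
  have := Fintype.ofFinite (X ⧸ W)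
  rw [Nat.card_eq_fintype_card, Nat.card_eq_fintype_card]
  refine Fintype.card_lt_of_surjective_not_injective _ W.mkQ_surjective fun hinj => hx0 (hinj ?_)
  simpa [Submodule.Quotient.mk_eq_zero] using hxW

lemma card_injective_eq_of_card_linearMap_eq [Finite A] [Finite B]
    (h : ∀ (X : Type v) [AddCommGroup X] [Module T X], Finite X →
      Nat.card (X →ₗ[T] A) = Nat.card (X →ₗ[T] B))
    (X : Type v) [AddCommGroup X] [Module T X] [Finite X] :
    Nat.card {g : X →ₗ[T] A // Injective g} = Nat.card {g : X →ₗ[T] B // Injective g} := by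
  induction hX : Nat.card X using Nat.strong_induction_on generalizing X with
  | _ n ih =>
  classical
  have := Fintype.ofFinite (Submodule T X)
  have hsum := h X inferInstance
  -- `Hom(X, A) ≃ Σ W, Inj(X ⧸ W, A)`, and the summands with `W ≠ ⊥` agree by induction
  rw [Nat.card_congr linearMapEquivSigmaInjective, Nat.card_congr linearMapEquivSigmaInjective,
    Nat.card_sigma, Nat.card_sigma, ← Finset.add_sum_erase _ _ (Finset.mem_univ ⊥),
    ← Finset.add_sum_erase _ _ (Finset.mem_univ ⊥),
    Finset.sum_congr rfl fun W hW =>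
      ih _ (hX ▸ Submodule.card_quotient_lt_of_ne_bot (Finset.ne_of_mem_erase hW)) (X ⧸ W) rfl]
    at hsum
  have e := Submodule.quotEquivOfEqBot (⊥ : Submodule T X) rfl
  rw [card_injective_linearMap_congr_left e.symm, card_injective_linearMap_congr_left e.symm]
  exact Nat.add_right_cancel hsum

lemma card_linearMap_prod :
    Nat.card (X →ₗ[T] A × B) = Nat.card (X →ₗ[T] A) * Nat.card (X →ₗ[T] B) := by
  rw [← Nat.card_prod]
  exact Nat.card_congr (LinearMap.prodEquiv (S := ℕ)).toEquiv.symm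

lemma card_linearMap_congr_right {A' : Type v} [AddCommGroup A'] [Module T A'] (e : A ≃ₗ[T] A') :
    Nat.card (X →ₗ[T] A) = Nat.card (X →ₗ[T] A') :=
  Nat.card_congr (LinearEquiv.arrowCongrAddEquiv (LinearEquiv.refl T X) e).toEquiv

theorem nonempty_linearEquiv_cancel_left {A' B' : Type v} [AddCommGroup A'] [Module T A']
    [AddCommGroup B'] [Module T B'] [Finite A] [Finite B] [Finite A'] [Finite B']
    (e : (A × B) ≃ₗ[T] (A' × B')) (eA : A ≃ₗ[T] A') : Nonempty (B ≃ₗ[T] B') := by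
  have hhom (X : Type v) [AddCommGroup X] [Module T X] (_ : Finite X) :
      Nat.card (X →ₗ[T] B) = Nat.card (X →ₗ[T] B') := by
    have hprod := card_linearMap_congr_right (X := X) e
    rw [card_linearMap_prod, card_linearMap_prod, card_linearMap_congr_right eA] at hprod
    exact Nat.eq_of_mul_eq_mul_left Nat.card_pos hprod
  have hcard : Nat.card B = Nat.card B' := by
    have hprod := Nat.card_congr e.toEquiv
    rw [Nat.card_prod, Nat.card_prod, Nat.card_congr eA.toEquiv] at hprod
    exact Nat.eq_of_mul_eq_mul_left Nat.card_pos hprod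
  have hinj : 0 < Nat.card {g : B →ₗ[T] B' // Injective g} := by
    rw [← card_injective_eq_of_card_linearMap_eq hhom]
    exact Nat.card_pos_iff.mpr ⟨⟨⟨.id, injective_id⟩⟩, inferInstance⟩
  obtain ⟨⟨g, hg⟩⟩ := Nat.card_pos_iff.mp hinj |>.1
  exact ⟨.ofBijective g ((Nat.bijective_iff_injective_and_card g).mpr ⟨hg, hcard⟩)⟩

end Cancellation

namespace Module.End

open LinearMap

variable {S : Type u} [Ring S] {M : Type v} [AddCommGroup M] [Module S M]

lemma apply_mem_range_pow_mul (f g : Module.End S M) (k : ℕ) {m : M}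
    (hm : m ∈ range ((g * f) ^ k)) : f m ∈ range ((f * g) ^ k) := by
  obtain ⟨n, rfl⟩ := hm
  exact ⟨f n, by rw [← Module.End.mul_apply, mul_pow_mul, Module.End.mul_apply]⟩

lemma apply_mem_ker_pow_mul (f g : Module.End S M) (k : ℕ) {m : M}
    (hm : m ∈ ker ((g * f) ^ k)) : f m ∈ ker ((f * g) ^ k) := by
  rw [mem_ker] at hm ⊢
  rw [← Module.End.mul_apply, mul_pow_mul, Module.End.mul_apply, hm, map_zero]

lemma injective_restrict_range_pow_mul {f g : Module.End S M} {k : ℕ} (hk : k ≠ 0)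
    (h : Disjoint (ker ((g * f) ^ k)) (range ((g * f) ^ k))) :
    Function.Injective (f.restrict fun _ => apply_mem_range_pow_mul f g k) := by
  rw [← ker_eq_bot, Submodule.eq_bot_iff]
  rintro ⟨p, hp⟩ hfp
  have hker : p ∈ ker ((g * f) ^ k) := by
    obtain ⟨k, rfl⟩ := Nat.exists_eq_succ_of_ne_zero hk
    have hfp' : f p = 0 := congrArg Subtype.val hfp
    rw [mem_ker, pow_succ, Module.End.mul_apply, Module.End.mul_apply, hfp', map_zero, map_zero]
  exact Subtype.ext (Submodule.disjoint_def.mp h p hker hp)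

/-- The isomorphism induced by `f`. -/
noncomputable def rangePowMulEquiv [Finite M] {f g : Module.End S M} {k : ℕ} (hk : k ≠ 0)
    (hgf : Disjoint (ker ((g * f) ^ k)) (range ((g * f) ^ k)))
    (hfg : Disjoint (ker ((f * g) ^ k)) (range ((f * g) ^ k))) :
    range ((g * f) ^ k) ≃ₗ[S] range ((f * g) ^ k) :=
  .ofBijective _ <| (Nat.bijective_iff_injective_and_card _).mpr
    ⟨injective_restrict_range_pow_mul hk hgf,
      le_antisymm (Nat.card_le_card_of_injective _ (injective_restrict_range_pow_mul hk hgf))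
        (Nat.card_le_card_of_injective _ (injective_restrict_range_pow_mul hk hfg))⟩

theorem exists_isUnit_add_one_sub_mul_mul [Finite M] (f g : Module.End S M) :
    ∃ h : Module.End S M, IsUnit (f + (1 - f * g) * h) := by
  have := isArtinian_of_finite (R := S) (M := M)
  obtain ⟨k, hk, hgf, hfg⟩ := ((Filter.eventually_ge_atTop 1).and <|
    (g * f).eventually_isCompl_ker_pow_range_pow.and
      (f * g).eventually_isCompl_ker_pow_range_pow).exists
  set τ := rangePowMulEquiv (by omega) hgf.disjoint hfg.disjoint
  obtain ⟨σ⟩ := nonempty_linearEquiv_cancel_left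
    (Submodule.prodEquivOfIsCompl _ _ hgf.symm ≪≫ₗ
      (Submodule.prodEquivOfIsCompl _ _ hfg.symm).symm) τ
  -- `ψ` is `σ` on the kernel part and `f` on the range part of the Fitting decomposition of `g * f`
  set ψ := (Submodule.prodEquivOfIsCompl _ _ hgf).symm ≪≫ₗ σ.prodCongr τ ≪≫ₗ
    Submodule.prodEquivOfIsCompl _ _ hfg
  have hψ (m : M) : ψ m - f m ∈ ker ((f * g) ^ k) := by
    set x := (Submodule.prodEquivOfIsCompl _ _ hgf).symm m
    have hm : m = x.1 + x.2 := ((Submodule.prodEquivOfIsCompl _ _ hgf).apply_symm_apply m).symm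
    have hψm : ψ m = σ x.1 + f x.2 := rfl
    rw [hψm, hm, map_add, add_sub_add_right_eq_sub]
    exact sub_mem (σ x.1).2 (apply_mem_ker_pow_mul f g k x.1.2)
  have hker : (f * g) ^ k * ((ψ : Module.End S M) - f) = 0 := LinearMap.ext hψ
  -- `(1 - f * g) * ∑ i < k, (f * g) ^ i = 1 - (f * g) ^ k` is the identity on `ker ((f * g) ^ k)`
  refine ⟨(∑ i ∈ Finset.range k, (f * g) ^ i) * ((ψ : Module.End S M) - f), ?_⟩
  rw [← mul_assoc, mul_neg_geom_sum, sub_mul, one_mul, hker, sub_zero, add_sub_cancel,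
    Module.End.isUnit_iff]
  exact ψ.bijective

end Module.End

theorem exists_isUnit_add_mul_one_sub_mul {S : Type*} [Ring S] [Finite S] (a b : S) :
    ∃ z : S, IsUnit (a + z * (1 - b * a)) := by
  let ρ := RingEquiv.moduleEndSelf S
  obtain ⟨h, hh⟩ := Module.End.exists_isUnit_add_one_sub_mul_mul (ρ (op a)) (ρ (op b))
  refine ⟨(ρ.symm h).unop, ?_⟩
  rw [← isUnit_op, ← isUnit_map_iff ρ]
  convert hh using 1
  simp only [op_add, op_mul, op_sub, op_one, op_unop, map_add, map_mul, map_sub, map_one,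
    RingEquiv.apply_symm_apply]

theorem exists_units_smul_eq_of_span_singleton_eq {S N : Type*} [Ring S] [Finite S]
    [AddCommGroup N] [Module S N] {x y : N} (h : S ∙ x = S ∙ y) : ∃ u : Sˣ, u • x = y := by
  obtain ⟨a, rfl⟩ := Submodule.mem_span_singleton.mp (h ▸ Submodule.mem_span_singleton_self y)
  obtain ⟨b, hb⟩ := Submodule.mem_span_singleton.mp (h.symm ▸ Submodule.mem_span_singleton_self x)
  obtain ⟨z, hz⟩ := exists_isUnit_add_mul_one_sub_mul a b
  refine ⟨hz.unit, ?_⟩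
  rw [Units.smul_def, IsUnit.unit_spec, add_smul, mul_smul, sub_smul, one_smul, mul_smul, hb,
    sub_self, smul_zero, add_zero]

section Matching

variable (S : Type*) {N : Type*} [Ring S] [AddCommGroup N] [Module S N]

noncomputable def smulCount (x y : N) : ℕ := Nat.card {s : S // s • x = y}

variable {S}

lemma smulCount_pos_iff [Finite S] {x y : N} : 0 < smulCount S x y ↔ y ∈ S ∙ x := by
  rw [smulCount, Nat.card_pos_iff, Submodule.mem_span_singleton, nonempty_subtype]
  exact ⟨And.left, fun h => ⟨h, inferInstance⟩⟩

lemma finite_span_singleton [Finite S] (x : N) : (S ∙ x : Set N).Finite :=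
  Submodule.span_singleton_eq_range S x ▸ Set.finite_range _

lemma smulCount_units_smul (u : Sˣ) (x y : N) : smulCount S (u • x) y = smulCount S x y :=
  Nat.card_congr <| (Units.mulRight u).subtypeEquiv fun s => by
    rw [Units.mulRight_apply, mul_smul, Units.smul_def]

lemma card_filter_smul_eq_eq_sum_smulCount [Fintype S] {ι : Type*} [Fintype ι] [DecidableEq N]
    (x : ι → N) (y : N) : #{p : ι × S | p.2 • x p.1 = y} = ∑ i, smulCount S (x i) y := by
  rw [card_filter, Fintype.sum_prod_type]
  refine sum_congr rfl fun i _ => ?_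
  rw [smulCount, Nat.card_eq_fintype_card, Fintype.card_subtype, card_filter]

lemma exists_span_singleton_eq_of_forall_card_le [Finite S] {ι : Type*} {x y : ι → N}
    {s t : Finset ι} (h : ∀ α, ∑ i ∈ s, smulCount S (x i) α = ∑ j ∈ t, smulCount S (y j) α)
    {i₀ : ι} (hi₀ : i₀ ∈ s)
    (hmax : ∀ j ∈ t, Nat.card (S ∙ y j) ≤ Nat.card (S ∙ x i₀)) :
    ∃ j₀ ∈ t, S ∙ x i₀ = S ∙ y j₀ := by
  have hpos : 0 < ∑ j ∈ t, smulCount S (y j) (x i₀) := by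
    rw [← h]
    exact (smulCount_pos_iff.mpr (Submodule.mem_span_singleton_self _)).trans_le
      (single_le_sum (f := fun i => smulCount S (x i) (x i₀)) (fun _ _ => Nat.zero_le _) hi₀)
  obtain ⟨j₀, hj₀, hcount⟩ := exists_ne_zero_of_sum_ne_zero hpos.ne'
  have hle : S ∙ x i₀ ≤ S ∙ y j₀ :=
    (Submodule.span_singleton_le_iff_mem _ _).mpr (smulCount_pos_iff.mp (Nat.pos_of_ne_zero hcount))
  exact ⟨j₀, hj₀, SetLike.coe_injective <|
    (finite_span_singleton _).eq_of_subset_of_card_le hle (hmax j₀ hj₀)⟩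

lemma exists_span_singleton_eq_of_sum_smulCount_eq [Finite S] {ι : Type*} {x y : ι → N}
    {s t : Finset ι} (h : ∀ α, ∑ i ∈ s, smulCount S (x i) α = ∑ j ∈ t, smulCount S (y j) α)
    (ht : t.Nonempty) : ∃ i₀ ∈ s, ∃ j₀ ∈ t, S ∙ x i₀ = S ∙ y j₀ := by
  classical
  obtain ⟨m, hm, hmax⟩ := (s.image x ∪ t.image y).exists_max_image (fun m => Nat.card (S ∙ m))
    ((ht.image y).mono subset_union_right)
  rcases mem_union.mp hm with hm | hm
  · obtain ⟨i₀, hi₀, rfl⟩ := mem_image.mp hm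
    obtain ⟨j₀, hj₀, he⟩ := exists_span_singleton_eq_of_forall_card_le h hi₀ fun j hj =>
      hmax _ (mem_union_right _ (mem_image_of_mem y hj))
    exact ⟨i₀, hi₀, j₀, hj₀, he⟩
  · obtain ⟨j₀, hj₀, rfl⟩ := mem_image.mp hm
    obtain ⟨i₀, hi₀, he⟩ := exists_span_singleton_eq_of_forall_card_le (fun α => (h α).symm) hj₀
      fun i hi => hmax _ (mem_union_left _ (mem_image_of_mem x hi))
    exact ⟨i₀, hi₀, j₀, hj₀, he.symm⟩

theorem exists_injOn_units_smul_eq_of_sum_smulCount_eq [Finite S] {ι : Type*} [DecidableEq ι]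
    (x y : ι → N) (s t : Finset ι)
    (h : ∀ α, ∑ i ∈ s, smulCount S (x i) α = ∑ j ∈ t, smulCount S (y j) α) :
    ∃ g : ι → ι, Set.MapsTo g t s ∧ Set.InjOn g t ∧ ∀ j ∈ t, ∃ u : Sˣ, u • x (g j) = y j := by
  induction t using Finset.strongInduction generalizing s with
  | H t ih =>
  rcases t.eq_empty_or_nonempty with rfl | ht
  · exact ⟨id, by simp [Set.MapsTo], by simp, by simp⟩
  obtain ⟨i₀, hi₀, j₀, hj₀, hspan⟩ := exists_span_singleton_eq_of_sum_smulCount_eq h ht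
  obtain ⟨u, hu⟩ := exists_units_smul_eq_of_span_singleton_eq hspan
  have herase (α : N) :
      ∑ i ∈ s.erase i₀, smulCount S (x i) α = ∑ j ∈ t.erase j₀, smulCount S (y j) α := by
    have hα := h α
    rw [← add_sum_erase s _ hi₀, ← add_sum_erase t _ hj₀, ← hu, smulCount_units_smul] at hα
    exact Nat.add_left_cancel hα
  obtain ⟨g, hgmaps, hginj, hgu⟩ := ih _ (erase_ssubset hj₀) _ herase
  have hg {j : ι} (hj : j ∈ t) (hjj : j ≠ j₀) : update g j₀ i₀ j = g j := update_of_ne hjj _ _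
  have hgmaps' {j : ι} (hj : j ∈ t) (hjj : j ≠ j₀) : g j ∈ s.erase i₀ :=
    hgmaps (mem_erase.mpr ⟨hjj, hj⟩)
  refine ⟨update g j₀ i₀, fun j hj => ?_, ?_, fun j hj => ?_⟩
  · rcases eq_or_ne j j₀ with rfl | hjj
    · simpa using hi₀
    · exact hg hj hjj ▸ mem_of_mem_erase (hgmaps' hj hjj)
  · rw [← insert_erase hj₀, coe_insert, Set.injOn_insert (by simp)]
    refine ⟨hginj.congr fun j hj => (hg (mem_of_mem_erase hj) (ne_of_mem_erase hj)).symm, ?_⟩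
    rintro ⟨j, hj, hgj⟩
    rw [update_self, hg (mem_of_mem_erase hj) (ne_of_mem_erase hj)] at hgj
    exact ne_of_mem_erase (hgmaps' (mem_of_mem_erase hj) (ne_of_mem_erase hj)) hgj
  · rcases eq_or_ne j j₀ with rfl | hjj
    · exact ⟨u, by simpa using hu⟩
    · exact hg hj hjj ▸ hgu j (mem_erase.mpr ⟨hjj, hj⟩)

end Matching

theorem LinearIndependent.card_filter_eq_of_sum_eq {K V κ ι : Type*} [Ring K] [CharZero K]
    [AddCommGroup V] [Module K V] [Fintype κ] [DecidableEq κ] [Fintype ι] {v : κ → V}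
    (hv : LinearIndependent K v) {F G : ι → κ} (h : ∑ i, v (F i) = ∑ i, v (G i)) (k : κ) :
    #{i | F i = k} = #{i | G i = k} := by
  have hfiber (H : ι → κ) : ∑ i, v (H i) = ∑ k, (#{i | H i = k} : K) • v k := by
    rw [← sum_fiberwise univ H]
    refine sum_congr rfl fun k _ => ?_
    rw [sum_congr rfl fun i hi => by rw [(mem_filter.mp hi).2], sum_const, Nat.cast_smul_eq_nsmul]
  have hzero := Fintype.linearIndependent_iff.mp hv (fun k => (#{i | F i = k} : K) - #{i | G i = k})
    (by simp only [sub_smul, sum_sub_distrib, ← hfiber, h, sub_self]) k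
  exact_mod_cast sub_eq_zero.mp hzero

def IsGeneratingCharacter {R : Type*} [Ring R] (χ : AddChar R ℂ) : Prop :=
  ∀ ψ : AddChar R ℂ, ∃! r : R, ∀ x : R, ψ x = χ (r * x)

namespace IsGeneratingCharacter

variable {R : Type*} [Ring R] {χ : AddChar R ℂ}

lemma eq_zero_of_forall_apply_mul_right_eq_one (hχ : IsGeneratingCharacter χ) {x : R}
    (hx : ∀ s, χ (x * s) = 1) : x = 0 :=
  (hχ 1).unique (fun s => (hx s).symm) fun s => by simp

lemma eq_zero_of_forall_apply_mul_left_eq_one [Finite R] (hχ : IsGeneratingCharacter χ) {x : R}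
    (hx : ∀ s, χ (s * x) = 1) : x = 0 := by
  by_contra hx0
  obtain ⟨ψ, hψ⟩ := AddChar.exists_apply_ne_zero.mpr hx0
  obtain ⟨r, hr, -⟩ := hχ ψ
  exact hψ ((hr x).trans (hx r))

lemma sum_apply_mul_eq_ite [Fintype R] [DecidableEq R] (hχ : IsGeneratingCharacter χ) (x : R) :
    ∑ s, χ (x * s) = if x = 0 then (Fintype.card R : ℂ) else 0 := by
  classical
  have hshift : χ.mulShift x = 0 ↔ x = 0 :=
    ⟨fun h => hχ.eq_zero_of_forall_apply_mul_right_eq_one fun s => by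
      simpa using DFunLike.congr_fun h s, by rintro rfl; ext; simp⟩
  simpa only [AddChar.mulShift_apply, hshift] using AddChar.sum_eq_ite (χ.mulShift x)

lemma linearMap_ext [Finite R] (hχ : IsGeneratingCharacter χ) {M : Type*} [AddCommGroup M]
    [Module R M] {l m : M →ₗ[R] R} (h : ∀ c, χ (l c) = χ (m c)) : l = m := by
  ext c
  refine sub_eq_zero.mp (hχ.eq_zero_of_forall_apply_mul_left_eq_one fun s => ?_)
  have hs := h (s • c)
  rw [l.map_smul, m.map_smul, smul_eq_mul, smul_eq_mul] at hs
  rw [mul_sub, sub_eq_add_neg, AddChar.map_add_eq_mul, hs, ← AddChar.map_add_eq_mul, add_neg_cancel,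
    AddChar.map_zero_eq_one]

end IsGeneratingCharacter

instance MulOpposite.fintype {α : Type*} [Fintype α] : Fintype αᵐᵒᵖ :=
  Fintype.ofEquiv α opEquiv

lemma IsGeneratingCharacter.sum_smulCount_eq {R : Type*} [Ring R] [Fintype R] [DecidableEq R]
    {χ : AddChar R ℂ} (hχ : IsGeneratingCharacter χ) {M : Type*} [AddCommGroup M] [Module R M]
    [Finite M] {ι : Type*} [Fintype ι] (l m : ι → (M →ₗ[R] R))
    (h : ∀ c, hammingNorm (fun i => l i c) = hammingNorm (fun i => m i c)) (α : M →ₗ[R] R) :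
    ∑ i, smulCount Rᵐᵒᵖ (l i) α = ∑ i, smulCount Rᵐᵒᵖ (m i) α := by
  classical
  let F (l : ι → (M →ₗ[R] R)) (p : ι × Rᵐᵒᵖ) : AddChar M ℂ :=
    χ.compAddMonoidHom (p.2 • l p.1).toAddMonoidHom
  have hF (l : ι → (M →ₗ[R] R)) (c : M) :
      ∑ p, F l p c = #{i | l i c = 0} * Fintype.card R := by
    rw [Fintype.sum_prod_type]
    simp only [F, AddChar.compAddMonoidHom_apply, LinearMap.toAddMonoidHom_coe,
      LinearMap.smul_apply, smul_eq_mul_unop]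
    rw [card_filter, Nat.cast_sum, sum_mul]
    refine sum_congr rfl fun i _ => ?_
    rw [← opEquiv.sum_comp]
    simp only [opEquiv_apply, unop_op, hχ.sum_apply_mul_eq_ite]
    split_ifs <;> simp
  have hzeros (c : M) : #{i | l i c = 0} = #{i | m i c = 0} := by
    have hl := card_filter_add_card_filter_not (s := univ) (fun i => l i c = 0)
    have hm := card_filter_add_card_filter_not (s := univ) (fun i => m i c = 0)
    have := h c
    simp only [hammingNorm, ne_eq] at this
    omega
  have hsum : ∑ p, ⇑(F l p) = ∑ p, ⇑(F m p) := by
    ext c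
    rw [Finset.sum_apply, Finset.sum_apply, hF, hF, hzeros]
  have hcount := (AddChar.linearIndependent M ℂ).card_filter_eq_of_sum_eq hsum
    (χ.compAddMonoidHom α.toAddMonoidHom)
  have hF_eq (l : ι → (M →ₗ[R] R)) (p : ι × Rᵐᵒᵖ) :
      F l p = χ.compAddMonoidHom α.toAddMonoidHom ↔ p.2 • l p.1 = α :=
    ⟨fun he => hχ.linearMap_ext fun c => DFunLike.congr_fun he c, fun he => by rw [← he]⟩
  simp only [hF_eq] at hcount
  rw [← card_filter_smul_eq_eq_sum_smulCount, ← card_filter_smul_eq_eq_sum_smulCount]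
  convert hcount

lemma hammingNorm_eq_sum_weight_mul {R ι : Type*} [Ring R] [Fintype R] [DecidableEq R] [Fintype ι]
    {w f : R → ℚ} (hf : ∀ x, ∑ r, w (r * x) * f r = if x = 0 then 0 else 1) (v : ι → R) :
    (hammingNorm v : ℚ) = ∑ r, (∑ i, w (r * v i)) * f r := by
  simp_rw [sum_mul]
  rw [sum_comm]
  simp [hf, hammingNorm, sum_ite]

lemma hammingNorm_eq_of_forall_sum_weight_mul_eq {R ι : Type*} [Ring R] [Fintype R]
    [DecidableEq R] [Fintype ι] {w f : R → ℚ}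
    (hf : ∀ x, ∑ r, w (r * x) * f r = if x = 0 then 0 else 1) {v v' : ι → R}
    (h : ∀ r, ∑ i, w (r * v i) = ∑ i, w (r * v' i)) : hammingNorm v = hammingNorm v' := by
  have hq := hammingNorm_eq_sum_weight_mul hf v
  simp only [h, ← hammingNorm_eq_sum_weight_mul hf v'] at hq
  exact_mod_cast hq

/-- on a finite Frobenius ring, a right-invariant weight `w` such that
the Hamming weight is a right correlation of `w` satisfies the Extension Property. -/
theorem stmt1 (R : Type) [Ring R] [Fintype R] [DecidableEq R]
    (hFrob : IsFrobenius R) (w : R → ℚ)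
    (hrinv : ∀ (u : Rˣ) (x : R), w (x * (u : R)) = w x)
    (hH : ∃ f : R → ℚ, ∀ x : R,
      (∑ r : R, w (r * x) * f r) = (if x = 0 then (0 : ℚ) else 1)) :
    ExtensionProperty R w := by
  obtain ⟨χ, hχ : IsGeneratingCharacter χ⟩ := hFrob
  obtain ⟨f, hf⟩ := hH
  intro n C φ _ hiso
  let x (i : Fin n) : C →ₗ[R] R := (LinearMap.proj i).comp C.subtype
  let y (i : Fin n) : C →ₗ[R] R := (LinearMap.proj i).comp φ
  have hham (c : C) : hammingNorm (fun i => x i c) = hammingNorm (fun i => y i c) :=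
    hammingNorm_eq_of_forall_sum_weight_mul_eq hf fun r => by simpa [x, y] using (hiso (r • c)).symm
  obtain ⟨g, -, hginj, hgu⟩ := exists_injOn_units_smul_eq_of_sum_smulCount_eq x y univ univ
    (hχ.sum_smulCount_eq x y hham)
  have hg : Bijective g :=
    Finite.injective_iff_bijective.mp (Set.injOn_univ.mp (by simpa using hginj))
  choose u hu using fun i => hgu i (mem_univ i)
  refine ⟨.ofBijective g hg, fun i => (Units.opEquiv (u i)).unop, fun i _ => hrinv _ _,
    fun c i => ?_⟩
  simpa [x, y, Units.smul_def, smul_eq_mul_unop] using (DFunLike.congr_fun (hu i) c).symm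
end

section
/- Let R be a finite Frobenius ring (a finite ring admitting a generating character: an additive character χ : (R,+) → ℂ^× such that r ↦ (x ↦ χ(rx)) is a bijection from R onto the group of additive characters of R), and let w : R → ℚ be a bi-invariant weight with w(0) = 0 that satisfies the Extension Property. Then the ℚ-linear map f ↦ wf, where (wf)(x) = ∑_{r ∈ R} w(rx)·f(r), from the space {f : R → ℚ : f(0) = 0 and f(ux) = f(x) for all x ∈ R, u ∈ R^×} to the space {g : R → ℚ : g(0) = 0 and g(xu) = g(x) for all x ∈ R, u ∈ R^×}, is bijective. -/
/-- The right correlation `f ↦ wf`, `(wf)(x) = ∑_{r ∈ R} w(rx)·f(r)`. -/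
def correlation (R : Type) [Ring R] [Fintype R] (w : R → ℚ) (f : R → ℚ) : R → ℚ :=
  fun x => ∑ r : R, w (r * x) * f r

/-- Left-invariant rational functions on `R` vanishing at `0`. -/
def leftInvV0 (R : Type) [Ring R] : Set (R → ℚ) :=
  {f | f 0 = 0 ∧ ∀ (u : Rˣ) (x : R), f ((u : R) * x) = f x}

/-- Right-invariant rational functions on `R` vanishing at `0`. -/
def rightInvV0 (R : Type) [Ring R] : Set (R → ℚ) :=
  {g | g 0 = 0 ∧ ∀ (u : Rˣ) (x : R), g (x * (u : R)) = g x}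

/-!
Write `W = (w (r * x))_{x, r}`, so that `f ↦ wf` is `f ↦ W f`. Bi-invariance and `w 0 = 0` make
`W` land in the right-invariant functions vanishing at `0` (`V_R`) and `Wᵀ` in the left-invariant
ones (`V_L`).

The Extension Property makes `Wᵀ` injective on `V_R`. If `Wᵀ g = 0`, clear denominators and let
`v`, `v'` be vectors in which each `z` occurs as often as the positive, resp. negative, part of
the multiplicity of `g z`. Then `Wᵀ g = 0` says that `x • v ↦ x • v'` preserves weight, so `v'` is
a monomial image of `v`; summing the right-invariant function `g` over both gives `∑ g z ^ 2 = 0`.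

In a Frobenius ring left and right annihilators have the same size, so by Burnside's lemma there
are as many left as right unit orbits, and `dim V_L = dim V_R`. Hence `Wᵀ : V_R → V_L` is onto,
and if `W f = 0` with `f = Wᵀ g` then `f ⬝ f = g ⬝ W f = 0`. So `W` is injective on `V_L`, hence
bijective onto `V_R`.
-/

open Matrix MulAction

section InvariantFunctions

variable (K : Type*) [Field K] (G : Type*) {X : Type*} [Group G] [MulAction G X]

def invariantsVanishingAt (x₀ : X) : Submodule K (X → K) where
  carrier := {f | f x₀ = 0 ∧ ∀ (g : G) (x : X), f (g • x) = f x}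
  add_mem' := by
    rintro f f' ⟨hf₀, hf⟩ ⟨hf'₀, hf'⟩
    exact ⟨by simp [hf₀, hf'₀], fun g x => by simp [hf, hf']⟩
  zero_mem' := ⟨rfl, fun _ _ => rfl⟩
  smul_mem' := by
    rintro c f ⟨hf₀, hf⟩
    exact ⟨by simp [hf₀], fun g x => by simp [hf]⟩

theorem invariantsVanishingAt_eq_map (x₀ : X) :
    invariantsVanishingAt K G x₀ =
      (LinearMap.ker (LinearMap.proj (R := K) (φ := fun _ => K) ⟦x₀⟧)).map
        (LinearMap.funLeft K K (Quotient.mk (orbitRel G X))) := by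
  ext f
  simp only [Submodule.mem_map, LinearMap.mem_ker, LinearMap.proj_apply]
  constructor
  · rintro ⟨hf₀, hf⟩
    refine ⟨Quotient.lift f ?_, hf₀, rfl⟩
    rintro _ y ⟨g, rfl⟩
    exact hf g y
  · rintro ⟨φ, hφ, rfl⟩
    exact ⟨hφ, fun g x => congrArg φ (Quotient.sound ⟨g, rfl⟩)⟩

theorem finrank_ker_proj_add_one {ι : Type*} [Fintype ι] (i : ι) :
    Module.finrank K (LinearMap.ker (LinearMap.proj i : (ι → K) →ₗ[K] K)) + 1 =
      Fintype.card ι := by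
  have := LinearMap.finrank_range_add_finrank_ker (LinearMap.proj i : (ι → K) →ₗ[K] K)
  rwa [LinearMap.range_eq_top.mpr (LinearMap.proj_surjective i), finrank_top,
    Module.finrank_self, Module.finrank_fintype_fun_eq_card, add_comm] at this

theorem finrank_invariantsVanishingAt_add_one [Finite X] (x₀ : X) :
    Module.finrank K (invariantsVanishingAt K G x₀) + 1 = Nat.card (orbitRel.Quotient G X) := by
  classical
  have : Fintype (orbitRel.Quotient G X) := Fintype.ofFinite _
  have hmk := LinearMap.funLeft_injective_of_surjective K K _
    (Quotient.mk_surjective (s := orbitRel G X))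
  rw [invariantsVanishingAt_eq_map, ← (Submodule.equivMapOfInjective _ hmk _).finrank_eq,
    Nat.card_eq_fintype_card, finrank_ker_proj_add_one]

end InvariantFunctions

theorem card_orbitRel_quotient_eq_of_card_fixedBy_eq {G H X Y : Type*} [Group G] [Group H]
    [MulAction G X] [MulAction H Y] [Finite G] [Finite X] [Finite Y] (e : G ≃ H)
    (he : ∀ g, Nat.card (fixedBy X g) = Nat.card (fixedBy Y (e g))) :
    Nat.card (orbitRel.Quotient G X) = Nat.card (orbitRel.Quotient H Y) := by
  classical
  have : Fintype G := Fintype.ofFinite G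
  have : Fintype H := Fintype.ofEquiv G e
  have : Fintype X := Fintype.ofFinite X
  have : Fintype Y := Fintype.ofFinite Y
  have hG := sum_card_fixedBy_eq_card_orbits_mul_card_group G X
  have hH := sum_card_fixedBy_eq_card_orbits_mul_card_group H Y
  have hsum : ∑ g : G, Fintype.card (fixedBy X g) = ∑ h : H, Fintype.card (fixedBy Y h) := by
    refine Fintype.sum_equiv e _ _ fun g => ?_
    simpa only [Nat.card_eq_fintype_card] using he g
  rw [hsum, hH, Fintype.card_congr e] at hG
  simpa only [Nat.card_eq_fintype_card] using
    (Nat.eq_of_mul_eq_mul_right Fintype.card_pos hG).symm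

def unitsEquivOpUnits (M : Type*) [Monoid M] : Mˣ ≃ Mᵐᵒᵖˣ :=
  MulOpposite.opEquiv.trans Units.opEquiv.symm.toEquiv

theorem unitsEquivOpUnits_smul {M : Type*} [Monoid M] (u : Mˣ) (x : M) :
    unitsEquivOpUnits M u • x = x * u := by
  rw [Units.smul_def, unitsEquivOpUnits, Equiv.trans_apply, MulEquiv.toEquiv_eq_coe,
    MulEquiv.coe_toEquiv, Units.coe_opEquiv_symm]
  rfl

theorem mem_invariantsVanishingAt_opUnits_iff {R : Type} [Ring R] {g : R → ℚ} :
    g ∈ invariantsVanishingAt ℚ Rᵐᵒᵖˣ (0 : R) ↔ g ∈ rightInvV0 R :=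
  and_congr_right' <| ((unitsEquivOpUnits R).forall_congr fun {u} => by
    simp only [unitsEquivOpUnits_smul]).symm

theorem IsFrobenius.card_mul_eq_zero_comm {R : Type} [Ring R] [Fintype R] (hR : IsFrobenius R)
    (a : R) : Nat.card {x : R // x * a = 0} = Nat.card {x : R // a * x = 0} := by
  classical
  obtain ⟨χ, hχ⟩ := hR
  have left_nondeg (s : R) (hs : ∀ x, χ (s * x) = 1) : s = 0 :=
    (hχ 1).unique (fun x => by simp [hs x]) (fun x => by simp)
  have right_nondeg (y : R) (hy : ∀ r, χ (r * y) = 1) : y = 0 :=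
    AddChar.forall_apply_eq_zero.mp fun ψ => by
      obtain ⟨r, hr, -⟩ := hχ ψ
      rw [hr, hy]
  have sum_mul_left (s : R) : ∑ x, χ (s * x) = if s = 0 then (Fintype.card R : ℂ) else 0 := by
    split_ifs with hs
    · simp [hs]
    · refine (AddChar.sum_eq_zero_iff_ne_zero (ψ := χ.mulShift s)).mpr
        (AddChar.ne_zero_iff.mpr ?_)
      by_contra! h
      exact hs (left_nondeg s h)
  have sum_mul_right (y : R) : ∑ r, χ (r * y) = if y = 0 then (Fintype.card R : ℂ) else 0 := by
    split_ifs with hy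
    · simp [hy]
    · refine (AddChar.sum_eq_zero_iff_ne_zero
        (ψ := χ.compAddMonoidHom (AddMonoidHom.mulRight y))).mpr (AddChar.ne_zero_iff.mpr ?_)
      by_contra! h
      exact hy (right_nondeg y h)
  have count (p : R → Prop) [DecidablePred p] :
      ∑ x, (if p x then (Fintype.card R : ℂ) else 0) = Nat.card {x // p x} * Fintype.card R := by
    rw [← Finset.sum_filter, Finset.sum_const, nsmul_eq_mul, Nat.card_eq_fintype_card,
      Fintype.card_subtype]
  have key : (Nat.card {x : R // x * a = 0} : ℂ) * Fintype.card R =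
      Nat.card {x : R // a * x = 0} * Fintype.card R := by
    calc _ = ∑ r, ∑ x, χ (r * a * x) := by simp only [sum_mul_left, count]
      _ = ∑ x, ∑ r, χ (r * (a * x)) := by rw [Finset.sum_comm]; simp only [mul_assoc]
      _ = _ := by simp only [sum_mul_right, count]
  exact_mod_cast mul_right_cancel₀ (Nat.cast_ne_zero.mpr Fintype.card_ne_zero) key

theorem IsFrobenius.card_orbitRel_quotient_units_eq {R : Type} [Ring R] [Fintype R]
    (hR : IsFrobenius R) :
    Nat.card (orbitRel.Quotient Rˣ R) = Nat.card (orbitRel.Quotient Rᵐᵒᵖˣ R) := by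
  refine card_orbitRel_quotient_eq_of_card_fixedBy_eq (unitsEquivOpUnits R) fun u => ?_
  calc Nat.card (fixedBy R u) = Nat.card {x : R // ((u : R) - 1) * x = 0} :=
        Nat.card_congr <| Equiv.subtypeEquivRight fun x => by
          rw [mem_fixedBy, Units.smul_def, smul_eq_mul, sub_mul, one_mul, sub_eq_zero]
    _ = Nat.card {x : R // x * ((u : R) - 1) = 0} := (hR.card_mul_eq_zero_comm _).symm
    _ = Nat.card (fixedBy R (unitsEquivOpUnits R u)) :=
        Nat.card_congr <| Equiv.subtypeEquivRight fun x => by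
          rw [mem_fixedBy, unitsEquivOpUnits_smul, mul_sub, mul_one, sub_eq_zero]

theorem IsFrobenius.finrank_invariantsVanishingAt_units_eq (K : Type*) [Field K] {R : Type}
    [Ring R] [Fintype R] (hR : IsFrobenius R) :
    Module.finrank K (invariantsVanishingAt K Rˣ (0 : R)) =
      Module.finrank K (invariantsVanishingAt K Rᵐᵒᵖˣ (0 : R)) := by
  have hL := finrank_invariantsVanishingAt_add_one K Rˣ (0 : R)
  have hR' := finrank_invariantsVanishingAt_add_one K Rᵐᵒᵖˣ (0 : R)
  have := hR.card_orbitRel_quotient_units_eq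
  omega

theorem exists_fin_vector_sum_eq {α M : Type*} [Fintype α] [Zero α] [AddCommMonoid M]
    (a : α → ℕ) {n : ℕ} (hn : ∑ z, a z ≤ n) :
    ∃ v : Fin n → α, ∀ F : α → M, F 0 = 0 → ∑ i, F (v i) = ∑ z, a z • F z := by
  have hcard : Fintype.card ((Σ z : α, Fin (a z)) ⊕ Fin (n - ∑ z, a z)) = n := by
    simp only [Fintype.card_sum, Fintype.card_sigma, Fintype.card_fin]
    omega
  let e := Fintype.equivFinOfCardEq hcard
  refine ⟨fun i => Sum.elim Sigma.fst (fun _ => 0) (e.symm i), fun F hF => ?_⟩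
  refine (e.symm.sum_comp fun j => F (Sum.elim Sigma.fst (fun _ => 0) j)).trans ?_
  simp [Fintype.sum_sum_type, Fintype.sum_sigma, hF]

theorem exists_ne_zero_mul_eq_natCast_sub {ι : Type*} [Finite ι] (c : ι → ℚ) :
    ∃ D : ℚ, D ≠ 0 ∧ ∃ a b : ι → ℕ, ∀ i, D * c i = a i - b i := by
  obtain ⟨D, hD⟩ := IsLocalization.exist_integer_multiples_of_finite (nonZeroDivisors ℤ) c
  choose m hm using hD
  refine ⟨(D : ℤ), by exact_mod_cast nonZeroDivisors.coe_ne_zero D,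
    fun i => (m i).toNat, fun i => (-m i).toNat, fun i => ?_⟩
  have h := congrArg (Int.cast : ℤ → ℚ) (Int.toNat_sub_toNat_neg (m i))
  push_cast at h
  rw [h, ← zsmul_eq_mul, ← hm i, eq_intCast]

namespace ExtensionProperty

variable {R : Type} [Ring R] {w : R → ℚ}

theorem exists_monomial (hEP : ExtensionProperty R w) {n : ℕ} {v v' : Fin n → R} {i₀ j₀ : Fin n}
    (hv : v i₀ = 1) (hv' : v' j₀ = 1) (hw : ∀ x : R, ∑ i, w (x * v' i) = ∑ i, w (x * v i)) :
    ∃ (π : Equiv.Perm (Fin n)) (u : Fin n → Rˣ), ∀ i, v' i = v (π i) * u i := by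
  let C := LinearMap.range (LinearMap.toSpanSingleton R _ v)
  have hC (c : C) : (c : Fin n → R) = (c : Fin n → R) i₀ • v := by
    obtain ⟨_, x, rfl⟩ := c
    simp [hv]
  let φ : C →ₗ[R] (Fin n → R) :=
    (LinearMap.toSpanSingleton R _ v').comp ((LinearMap.proj i₀).comp C.subtype)
  have hφ (c : C) : φ c = (c : Fin n → R) i₀ • v' := rfl
  have hinj : Function.Injective φ := fun c d h => by
    have : (c : Fin n → R) i₀ = (d : Fin n → R) i₀ := by simpa [hφ, hv'] using congrFun h j₀
    exact Subtype.ext (by rw [hC c, hC d, this])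
  have hiso (c : C) : ∑ i, w (φ c i) = ∑ i, w ((c : Fin n → R) i) := by
    conv_rhs => rw [hC c]
    simpa [hφ] using hw _
  obtain ⟨π, u, -, hπu⟩ := hEP n C φ hinj hiso
  exact ⟨π, u, fun i => by simpa [hφ, hv] using hπu ⟨v, 1, one_smul R v⟩ i⟩

variable [Fintype R]

theorem sum_nsmul_eq (hEP : ExtensionProperty R w) (h0 : w 0 = 0) {a b : R → ℕ}
    (hab : ∀ x, ∑ z, a z • w (x * z) = ∑ z, b z • w (x * z)) {F : R → ℚ}
    (hF : F ∈ rightInvV0 R) : ∑ z, a z • F z = ∑ z, b z • F z := by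
  set N := ∑ z, a z + ∑ z, b z
  obtain ⟨v, hv⟩ := exists_fin_vector_sum_eq (M := ℚ) a (n := N) le_self_add
  obtain ⟨v', hv'⟩ := exists_fin_vector_sum_eq (M := ℚ) b (n := N) le_add_self
  have hcons (v : Fin N → R) (G : R → ℚ) :
      ∑ i, G ((Fin.cons 1 v : Fin (N + 1) → R) i) = G 1 + ∑ i, G (v i) := by
    simp only [Fin.sum_univ_succ, Fin.cons_zero, Fin.cons_succ]
  -- the leading coordinate `1` makes `x ↦ x • v` injective
  obtain ⟨π, u, hπu⟩ := hEP.exists_monomial (v := Fin.cons 1 v) (v' := Fin.cons 1 v')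
    (i₀ := 0) (j₀ := 0) rfl rfl fun x => by
      rw [hcons _ fun y => w (x * y), hcons _ fun y => w (x * y),
        hv (fun y => w (x * y)) (by simp [h0]), hv' (fun y => w (x * y)) (by simp [h0]), hab]
  have : ∑ i, F ((Fin.cons 1 v' : Fin (N + 1) → R) i) =
      ∑ i, F ((Fin.cons 1 v : Fin (N + 1) → R) i) := by
    simp only [hπu, hF.2]
    exact Equiv.sum_comp π fun j => F ((Fin.cons 1 v : Fin (N + 1) → R) j)
  rwa [hcons, hcons, hv F hF.1, hv' F hF.1, add_right_inj, eq_comm] at this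

theorem sum_mul_eq_zero (hEP : ExtensionProperty R w) (h0 : w 0 = 0) {c : R → ℚ}
    (hc : ∀ x, ∑ z, w (x * z) * c z = 0) {F : R → ℚ} (hF : F ∈ rightInvV0 R) :
    ∑ z, F z * c z = 0 := by
  obtain ⟨D, hD, a, b, hab⟩ := exists_ne_zero_mul_eq_natCast_sub c
  have hsplit (G : R → ℚ) : D * ∑ z, G z * c z = ∑ z, a z • G z - ∑ z, b z • G z := by
    rw [Finset.mul_sum, ← Finset.sum_sub_distrib]
    refine Finset.sum_congr rfl fun z _ => ?_
    rw [mul_left_comm, hab, nsmul_eq_mul, nsmul_eq_mul]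
    ring
  have := hEP.sum_nsmul_eq h0 (a := a) (b := b)
    (fun x => by rw [← sub_eq_zero, ← hsplit, hc, mul_zero]) hF
  rw [← sub_eq_zero, ← hsplit] at this
  exact (mul_eq_zero.mp this).resolve_left hD

end ExtensionProperty

theorem Matrix.transpose_mulVec_eq_zero_of_mulVec_transpose_mulVec_eq_zero {m n K : Type*}
    [Fintype m] [Fintype n] [Field K] [LinearOrder K] [IsStrictOrderedRing K]
    (W : Matrix m n K) (g : m → K) (h : W *ᵥ (Wᵀ *ᵥ g) = 0) : Wᵀ *ᵥ g = 0 := by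
  have hker : (Wᵀᵀ * Wᵀ) *ᵥ g = 0 := by rwa [transpose_transpose, ← mulVec_mulVec]
  exact (ker_mulVecLin_transpose_mul_self Wᵀ).le hker

section WeightMatrix

variable {R : Type} [Ring R] [Fintype R] {w : R → ℚ}

def weightMatrix (w : R → ℚ) : Matrix R R ℚ :=
  Matrix.of fun x r => w (r * x)

theorem correlation_eq_mulVec : correlation R w = (weightMatrix w *ᵥ ·) := rfl

theorem weightMatrix_mulVec_mem_rightInvV0 (hw : ∀ (u : Rˣ) (x : R), w (x * u) = w x)
    (h0 : w 0 = 0) (f : R → ℚ) : weightMatrix w *ᵥ f ∈ rightInvV0 R :=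
  ⟨by simp [weightMatrix, mulVec, dotProduct, h0],
    fun u x => by simp only [weightMatrix, mulVec, dotProduct, of_apply, ← mul_assoc, hw]⟩

theorem weightMatrix_transpose_mulVec_mem_leftInvV0 (hw : ∀ (u : Rˣ) (x : R), w (u * x) = w x)
    (h0 : w 0 = 0) (g : R → ℚ) : (weightMatrix w)ᵀ *ᵥ g ∈ leftInvV0 R :=
  ⟨by simp [weightMatrix, mulVec, dotProduct, h0],
    fun u r => by
      simp only [weightMatrix, mulVec, dotProduct, transpose_apply, of_apply, mul_assoc, hw]⟩

theorem ExtensionProperty.eq_zero_of_transpose_mulVec_eq_zero (hEP : ExtensionProperty R w)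
    (h0 : w 0 = 0) {g : R → ℚ} (hg : g ∈ rightInvV0 R) (h : (weightMatrix w)ᵀ *ᵥ g = 0) :
    g = 0 :=
  dotProduct_self_eq_zero.mp <| hEP.sum_mul_eq_zero h0 (fun x => congrFun h x) hg

end WeightMatrix

theorem LinearMap.bijOn_of_bijective_restrict {K M N : Type*} [Semiring K] [AddCommMonoid M]
    [AddCommMonoid N] [Module K M] [Module K N] {f : M →ₗ[K] N} {p : Submodule K M}
    {q : Submodule K N} (h : ∀ x ∈ p, f x ∈ q) (hf : Function.Bijective (f.restrict h)) :
    Set.BijOn f p q :=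
  ⟨h, (Set.MapsTo.restrict_inj h).mp hf.1, (Set.MapsTo.restrict_surjective_iff h).mp hf.2⟩

/-- if the bi-invariant weight `w` with `w 0 = 0` satisfies the
Extension Property, then the correlation map `f ↦ wf` is a bijection from the
left-invariant functions vanishing at `0` onto the right-invariant functions
vanishing at `0`. -/
theorem stmt4 (R : Type) [Ring R] [Fintype R] (hFrob : IsFrobenius R)
    (w : R → ℚ)
    (hbi : ∀ (u : Rˣ) (x : R), w ((u : R) * x) = w x ∧ w (x * (u : R)) = w x)
    (h0 : w 0 = 0) (hEP : ExtensionProperty R w) :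
    Set.BijOn (correlation R w) (leftInvV0 R) (rightInvV0 R) := by
  have hw_left (u : Rˣ) (x : R) := (hbi u x).1
  have hw_right (u : Rˣ) (x : R) := (hbi u x).2
  set VL := invariantsVanishingAt ℚ Rˣ (0 : R)
  set VR := invariantsVanishingAt ℚ Rᵐᵒᵖˣ (0 : R)
  have hVR : rightInvV0 R = VR := Set.ext fun _ => mem_invariantsVanishingAt_opUnits_iff.symm
  have hdim : Module.finrank ℚ VL = Module.finrank ℚ VR :=
    hFrob.finrank_invariantsVanishingAt_units_eq ℚ
  let A : VL →ₗ[ℚ] VR := (weightMatrix w).mulVecLin.restrict fun f _ =>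
    mem_invariantsVanishingAt_opUnits_iff.mpr (weightMatrix_mulVec_mem_rightInvV0 hw_right h0 f)
  let B : VR →ₗ[ℚ] VL := (weightMatrix w)ᵀ.mulVecLin.restrict fun g _ =>
    weightMatrix_transpose_mulVec_mem_leftInvV0 hw_left h0 g
  have hB_inj : Function.Injective B := (injective_iff_map_eq_zero B).mpr fun g hg =>
    Subtype.ext <| hEP.eq_zero_of_transpose_mulVec_eq_zero h0
      (mem_invariantsVanishingAt_opUnits_iff.mp g.2) (congrArg Subtype.val hg)
  have hB_surj := (LinearMap.injective_iff_surjective_of_finrank_eq_finrank hdim.symm).mp hB_inj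
  have hA_inj : Function.Injective A := (injective_iff_map_eq_zero A).mpr fun f hf => by
    obtain ⟨g, rfl⟩ := hB_surj f
    exact Subtype.ext (transpose_mulVec_eq_zero_of_mulVec_transpose_mulVec_eq_zero _ _
      (congrArg Subtype.val hf))
  rw [correlation_eq_mulVec, hVR]
  exact LinearMap.bijOn_of_bijective_restrict _
    ⟨hA_inj, (LinearMap.injective_iff_surjective_of_finrank_eq_finrank hdim).mp hA_inj⟩
end

section
/- Let K be a commutative ring, n a natural number, W' an n×n matrix over K, and w₀ ∈ K. Let W be the (n+1)×(n+1) matrix whose first row and first column have all entries equal to w₀ and whose remaining n×n block is W'. Then det W = w₀ · det(W' − w₀·J), where J is the n×n all-ones matrix. -/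
namespace Matrix

variable {R : Type*} [CommRing R] {n : ℕ}

/-- Subtracting the first row from all others clears the first column except for its top entry. -/
theorem det_succ_of_col_zero_eq (A : Matrix (Fin (n + 1)) (Fin (n + 1)) R) (a : R)
    (hcol : ∀ i, A i 0 = a) :
    A.det = a * (of fun i j : Fin n => A i.succ j.succ - A 0 j.succ).det := by
  set B : Matrix (Fin (n + 1)) (Fin (n + 1)) R :=
    of fun i j => if i = 0 then A 0 j else A i j - A 0 j
  have hAB : A.det = B.det :=
    det_eq_of_forall_row_eq_smul_add_const (fun i => if i = 0 then 0 else 1) 0 (if_pos rfl)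
      fun i j => by by_cases hi : i = 0 <;> simp [B, hi]
  have hB0 : ∀ i : Fin n, B i.succ 0 = 0 := fun i => by simp [B, hcol]
  rw [hAB, det_succ_column_zero, Fin.sum_univ_succ]
  simp only [hB0, mul_zero, zero_mul, Finset.sum_const_zero, add_zero]
  simp [B, hcol, submatrix]

end Matrix

/-- if the `(n+1)×(n+1)` matrix `W` has all entries of its first
row and first column equal to `w₀` and remaining `n×n` block `W'`, then
`det W = w₀ · det (W' − w₀ · J)`, `J` the all-ones matrix. -/
theorem stmt6 (K : Type) [CommRing K] (n : ℕ)
    (W' : Matrix (Fin n) (Fin n) K) (w₀ : K)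
    (W : Matrix (Fin (n + 1)) (Fin (n + 1)) K)
    (hrow : ∀ j, W 0 j = w₀) (hcol : ∀ i, W i 0 = w₀)
    (hblock : ∀ i j : Fin n, W i.succ j.succ = W' i j) :
    W.det = w₀ * (W' - w₀ • Matrix.of (fun _ _ => (1 : K))).det := by
  rw [W.det_succ_of_col_zero_eq w₀ hcol]
  congr 2
  ext i j
  simp [hblock, hrow]
end

section
/- Let R be a finite principal ideal ring (every left ideal and every right ideal of R is principal). For a left ideal L of R let L^⊥ = {y ∈ R : ay = 0 for all a ∈ L} denote its right annihilator, a right ideal. Let μ be the Möbius function of the finite lattice of right ideals of R. Define the matrix T, with rows indexed by left ideals and columns indexed by right ideals of R, by T(L, J) = 1 if J ≤ L^⊥ and T(L, J) = 0 otherwise, and define the matrix Q, with rows indexed by right ideals and columns indexed by left ideals, by Q(J, L) = μ(L^⊥, J). Then T·Q is the identity matrix indexed by the left ideals of R. -/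
open scoped Classical

/-- The right annihilator `L^⊥ = {y ∈ R : ay = 0 for all a ∈ L}` of a left
ideal `L`, as a right ideal (a submodule of `R` over `Rᵐᵒᵖ`). -/
def rAnn (R : Type) [Ring R] (L : Submodule R R) : Submodule Rᵐᵒᵖ R where
  carrier := {y : R | ∀ a ∈ L, a * y = 0}
  zero_mem' := fun a _ => mul_zero a
  add_mem' := by
    intro y z hy hz a ha
    rw [mul_add, hy a ha, hz a ha, add_zero]
  smul_mem' := by
    intro c y hy a ha
    rw [MulOpposite.smul_eq_mul_unop, ← mul_assoc, hy a ha, zero_mul]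

noncomputable instance (R : Type) [Ring R] [Fintype R] :
    Fintype (Submodule R R) := Fintype.ofFinite _

noncomputable instance (R : Type) [Ring R] [Fintype R] :
    Fintype (Submodule Rᵐᵒᵖ R) := Fintype.ofFinite _

/-!
By the defining recursion of `μ`, `(T * Q) L M = [M^⊥ = L^⊥]`, so the theorem is the injectivity
of `L ↦ L^⊥`, i.e. the double annihilator property `l(r(R c)) = R c` for the generators `c` of
left ideals. It is proved together with its mirror image `r(l(c R)) = c R` by induction on
`|l(c)| + |r(c)|`. If `l(r(c)) = R c'` is strictly larger than `R c`, then `r(c') = r(c)` while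
`l(c')` is strictly smaller, so `c' R` is closed by induction. Writing `c = t c'`, the left ideal
`l(c' R) + R t` has no nonzero right annihilator, hence (being principal in a finite ring) is all
of `R`, and `1 ∈ l(c' R) + R t` puts `c'` in `R c`. The mirror statement is the same argument
in `Rᵐᵒᵖ`.
-/

open MulOpposite

instance MulOpposite.instFinite {α : Type*} [Finite α] : Finite αᵐᵒᵖ :=
  Finite.of_equiv α opEquiv

theorem sum_ite_le_mobius {P M : Type*} [PartialOrder P] [Fintype P]
    [AddCommMonoidWithOne M] (μ : P → P → M) (hμ₁ : ∀ I, μ I I = 1)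
    (hμ₂ : ∀ I J, I < J → ∑ K ∈ Finset.univ.filter (fun K => I ≤ K ∧ K ≤ J), μ I K = 0)
    (hμ₃ : ∀ I J, ¬ I ≤ J → μ I J = 0) (x y : P) :
    ∑ J, (if J ≤ y then μ x J else 0) = if x = y then 1 else 0 := by
  have hsum : ∑ J, (if J ≤ y then μ x J else 0) =
      ∑ K ∈ Finset.univ.filter (fun K => x ≤ K ∧ K ≤ y), μ x K := by
    rw [Finset.sum_filter]
    refine Finset.sum_congr rfl fun J _ => ?_
    by_cases hxJ : x ≤ J <;> simp [hxJ, hμ₃]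
  rw [hsum]
  rcases eq_or_ne x y with rfl | hne
  · rw [if_pos rfl, Finset.sum_eq_single_of_mem x (by simp) fun J hJ hne =>
      absurd (le_antisymm (Finset.mem_filter.mp hJ).2.2 (Finset.mem_filter.mp hJ).2.1) hne, hμ₁]
  · rw [if_neg hne]
    by_cases hxy : x ≤ y
    · exact hμ₂ x y (lt_of_le_of_ne hxy hne)
    · exact Finset.sum_eq_zero fun K hK => absurd ((Finset.mem_filter.mp hK).2.1.trans
        (Finset.mem_filter.mp hK).2.2) hxy

namespace DoubleAnnihilator

variable {S : Type*} [Ring S]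

/-- `S c` is the left annihilator of the right annihilator of `c`. -/
def IsLeftClosed (c : S) : Prop :=
  ∀ x : S, (∀ y, c * y = 0 → x * y = 0) → ∃ s, x = s * c

/-- `c S` is the right annihilator of the left annihilator of `c`. -/
def IsRightClosed (c : S) : Prop :=
  ∀ x : S, (∀ y, y * c = 0 → y * x = 0) → ∃ s, x = c * s

theorem isLeftClosed_op_iff {c : S} : IsLeftClosed (op c) ↔ IsRightClosed c := by
  simp only [IsLeftClosed, IsRightClosed, op_surjective.forall, op_surjective.exists,
    ← op_mul, op_eq_zero_iff, op_inj]

theorem isRightClosed_op_iff {c : S} : IsRightClosed (op c) ↔ IsLeftClosed c := by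
  simp only [IsLeftClosed, IsRightClosed, op_surjective.forall, op_surjective.exists,
    ← op_mul, op_eq_zero_iff, op_inj]

noncomputable def annCard (c : S) : ℕ :=
  {x : S | x * c = 0}.ncard + {y : S | c * y = 0}.ncard

theorem annCard_op (c : S) : annCard (op c) = annCard c := by
  have hl : {x : Sᵐᵒᵖ | x * op c = 0} = unop ⁻¹' {y : S | c * y = 0} := by
    ext x; exact (unop_eq_zero_iff _).symm
  have hr : {y : Sᵐᵒᵖ | op c * y = 0} = unop ⁻¹' {x : S | x * c = 0} := by
    ext y; exact (unop_eq_zero_iff _).symm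
  have hsurj : ∀ s : Set S, s ⊆ Set.range unop := fun _ x _ => ⟨op x, rfl⟩
  rw [annCard, annCard, hl, hr, Set.ncard_preimage_of_injective_subset_range unop_injective
    (hsurj _), Set.ncard_preimage_of_injective_subset_range unop_injective (hsurj _), add_comm]

theorem ncard_leftAnn_mul_ncard_range (c : S) :
    {x : S | x * c = 0}.ncard * (Set.range (· * c)).ncard = Nat.card S := by
  have h := (AddMonoidHom.mulRight c).ker.card_mul_index
  rw [AddSubgroup.index_ker] at h
  rw [← Nat.card_coe_set_eq, ← Nat.card_coe_set_eq]
  exact h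

variable [Finite S]

theorem annCard_lt {c c' t : S} (ht : c = t * c') (hr : ∀ y, c * y = 0 → c' * y = 0)
    (hne : ¬ ∃ s, c' = s * c) : annCard c' < annCard c := by
  have hrange : Set.range (· * c) ⊂ Set.range (· * c') := by
    refine ⟨?_, fun h => hne ?_⟩
    · rintro _ ⟨s, rfl⟩
      exact ⟨s * t, by simp only [ht, mul_assoc]⟩
    · obtain ⟨s, hs⟩ := h ⟨1, one_mul c'⟩
      exact ⟨s, hs.symm⟩
  have hleft : {x : S | x * c' = 0}.ncard < {x : S | x * c = 0}.ncard := by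
    have hlt := Set.ncard_lt_ncard hrange
    have hpos : 0 < {x : S | x * c = 0}.ncard := (Set.ncard_pos).mpr ⟨0, zero_mul c⟩
    refine Nat.lt_of_mul_lt_mul_right (a := (Set.range (· * c')).ncard) ?_
    rw [ncard_leftAnn_mul_ncard_range, ← ncard_leftAnn_mul_ncard_range c]
    exact Nat.mul_lt_mul_of_pos_left hlt hpos
  have hright : {y : S | c' * y = 0} = {y : S | c * y = 0} := by
    ext y
    refine ⟨fun h => ?_, hr y⟩
    change c' * y = 0 at h
    change c * y = 0
    rw [ht, mul_assoc, h, mul_zero]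
  rw [annCard, annCard, hright]
  omega

variable [IsPrincipalIdealRing S]

theorem exists_eq_mul_of_isRightClosed {a c t : S} (hta : a = t * c)
    (hr : ∀ y, a * y = 0 → c * y = 0) (hc : IsRightClosed c) : ∃ s, c = s * a := by
  set W : Ideal S := LinearMap.ker (LinearMap.toSpanSingleton S S c) ⊔ Ideal.span {t}
  -- `v` killed by `W` lies in `r(l(c S)) = c S`, say `v = c s`; then `a s = t v = 0`, so `v = 0`.
  have hW : W = ⊤ := by
    obtain ⟨w, hw⟩ := (IsPrincipalIdealRing.principal W).principal
    refine W.eq_top_of_isUnit_mem (x := w) (hw ▸ Submodule.mem_span_singleton_self w) ?_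
    refine (isLeftRegular_of_non_zero_divisor w fun v hwv => ?_).isUnit_of_finite
    have hWv : ∀ x ∈ W, x * v = 0 := by
      rw [hw]
      rintro _ hx
      obtain ⟨u, rfl⟩ := Submodule.mem_span_singleton.mp hx
      rw [smul_eq_mul, mul_assoc, hwv, mul_zero]
    obtain ⟨s, rfl⟩ := hc v fun y hy => hWv y (Submodule.mem_sup_left (by simpa using hy))
    refine hr s ?_
    rw [hta, mul_assoc]
    exact hWv t (Submodule.mem_sup_right (Ideal.mem_span_singleton_self t))
  obtain ⟨p, hp, q, hq, hpq⟩ := Submodule.mem_sup.mp (hW ▸ Submodule.mem_top : (1 : S) ∈ W)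
  obtain ⟨y, rfl⟩ := Ideal.mem_span_singleton'.mp hq
  rw [LinearMap.mem_ker, LinearMap.toSpanSingleton_apply, smul_eq_mul] at hp
  refine ⟨y, ?_⟩
  calc c = (p + y * t) * c := by rw [hpq, one_mul]
    _ = y * a := by rw [add_mul, hp, zero_add, mul_assoc, hta]

theorem isLeftClosed_of_isRightClosed (c : S)
    (ih : ∀ c' : S, annCard c' < annCard c → IsRightClosed c') : IsLeftClosed c := by
  set K : Ideal S := ⨅ y ∈ {y : S | c * y = 0}, LinearMap.ker (LinearMap.toSpanSingleton S S y)
  have hK : ∀ x, x ∈ K ↔ ∀ y, c * y = 0 → x * y = 0 := by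
    intro x
    simp [K]
  obtain ⟨c', hc'⟩ := (IsPrincipalIdealRing.principal K).principal
  have hrc' : ∀ y, c * y = 0 → c' * y = 0 :=
    (hK c').mp (hc' ▸ Submodule.mem_span_singleton_self c')
  obtain ⟨t, ht⟩ := Ideal.mem_span_singleton'.mp (hc' ▸ (hK c).mpr fun _ => id)
  obtain ⟨s, hs⟩ : ∃ s, c' = s * c := by
    by_contra hne
    exact hne (exists_eq_mul_of_isRightClosed ht.symm hrc' (ih c' (annCard_lt ht.symm hrc' hne)))
  intro x hx
  obtain ⟨u, rfl⟩ := Ideal.mem_span_singleton'.mp (hc' ▸ (hK x).mpr hx)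
  exact ⟨u * s, by rw [hs, mul_assoc]⟩

theorem isLeftClosed_and_isRightClosed [IsPrincipalIdealRing Sᵐᵒᵖ] (c : S) :
    IsLeftClosed c ∧ IsRightClosed c :=
  ⟨isLeftClosed_of_isRightClosed c fun c' _ => (isLeftClosed_and_isRightClosed c').2,
    isLeftClosed_op_iff.mp <| isLeftClosed_of_isRightClosed (op c) fun c' _ =>
      isRightClosed_op_iff.mpr (isLeftClosed_and_isRightClosed c'.unop).1⟩
termination_by annCard c
decreasing_by
  · assumption
  · rwa [← annCard_op, op_unop, ← annCard_op c]

end DoubleAnnihilator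

open DoubleAnnihilator

theorem isPrincipalIdealRing_mulOpposite {R : Type*} [Ring R]
    (h : ∀ J : Submodule Rᵐᵒᵖ R, J.IsPrincipal) : IsPrincipalIdealRing Rᵐᵒᵖ := by
  let e : R →ₗ[Rᵐᵒᵖ] Rᵐᵒᵖ :=
    { toFun := op, map_add' := fun _ _ => rfl, map_smul' := fun _ _ => rfl }
  refine ⟨fun I => ?_⟩
  have := h (Submodule.comap e I)
  exact Submodule.IsPrincipal.of_comap e op_surjective I

theorem mem_rAnn_span_singleton {R : Type} [Ring R] {a y : R} :
    y ∈ rAnn R (Submodule.span R {a}) ↔ a * y = 0 := by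
  refine ⟨fun h => h a (Submodule.mem_span_singleton_self a), fun h x hx => ?_⟩
  obtain ⟨s, rfl⟩ := Submodule.mem_span_singleton.mp hx
  rw [smul_eq_mul, mul_assoc, h, mul_zero]

theorem rAnn_le_rAnn_iff {R : Type} [Ring R] [Finite R] [IsPrincipalIdealRing R]
    [IsPrincipalIdealRing Rᵐᵒᵖ] {L M : Submodule R R} : rAnn R L ≤ rAnn R M ↔ M ≤ L := by
  refine ⟨fun h => ?_, fun h y hy x hx => hy x (h hx)⟩
  obtain ⟨a, rfl⟩ := (IsPrincipalIdealRing.principal L).principal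
  obtain ⟨b, rfl⟩ := (IsPrincipalIdealRing.principal M).principal
  obtain ⟨s, hs⟩ := (isLeftClosed_and_isRightClosed a).1 b fun y hy =>
    mem_rAnn_span_singleton.mp (h (mem_rAnn_span_singleton.mpr hy))
  exact (Submodule.span_singleton_le_iff_mem _ _).mpr
    (Submodule.mem_span_singleton.mpr ⟨s, hs.symm⟩)

theorem rAnn_injective (R : Type) [Ring R] [Finite R] [IsPrincipalIdealRing R]
    [IsPrincipalIdealRing Rᵐᵒᵖ] : Function.Injective (rAnn R) := fun _ _ h =>
  le_antisymm (rAnn_le_rAnn_iff.mp h.ge) (rAnn_le_rAnn_iff.mp h.le)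

/-- over a finite principal ideal ring, the matrix
`T(L,J) = [J ≤ L^⊥]` (rows: left ideals, columns: right ideals) and the matrix
`Q(J,L) = μ(L^⊥, J)` (rows: right ideals, columns: left ideals), where `μ` is
the Möbius function of the lattice of right ideals, satisfy `T·Q = 1`. -/
theorem stmt7 (R : Type) [Ring R] [Fintype R]
    (hlp : ∀ L : Submodule R R, ∃ a : R, L = Submodule.span R {a})
    (hrp : ∀ J : Submodule Rᵐᵒᵖ R, ∃ a : R, J = Submodule.span Rᵐᵒᵖ {a})
    (μ : Submodule Rᵐᵒᵖ R → Submodule Rᵐᵒᵖ R → ℚ)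
    (hμ₁ : ∀ I, μ I I = 1)
    (hμ₂ : ∀ I J, I < J →
      ∑ K ∈ Finset.univ.filter (fun K => I ≤ K ∧ K ≤ J), μ I K = 0)
    (hμ₃ : ∀ I J, ¬ I ≤ J → μ I J = 0)
    (T : Matrix (Submodule R R) (Submodule Rᵐᵒᵖ R) ℚ)
    (hT : ∀ L J, T L J = if J ≤ rAnn R L then 1 else 0)
    (Q : Matrix (Submodule Rᵐᵒᵖ R) (Submodule R R) ℚ)
    (hQ : ∀ J L, Q J L = μ (rAnn R L) J) :
    T * Q = 1 := by
  have : IsPrincipalIdealRing R := ⟨fun L => ⟨hlp L⟩⟩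
  have : IsPrincipalIdealRing Rᵐᵒᵖ := isPrincipalIdealRing_mulOpposite fun J => ⟨hrp J⟩
  ext L M
  simp only [Matrix.mul_apply, Matrix.one_apply, hT, hQ, ite_mul, one_mul, zero_mul]
  rw [sum_ite_le_mobius μ hμ₁ hμ₂ hμ₃, (rAnn_injective R).eq_iff]
  exact if_congr eq_comm rfl rfl
end

section
/- Let R be a finite Frobenius ring (a finite ring admitting a generating character: an additive character χ : (R,+) → ℂ^× such that r ↦ (x ↦ χ(rx)) is a bijection from R onto the group of additive characters of R), and let w_H be the Hamming weight on R. Then every right-invariant function g : R → ℚ with g(0) = 0 is a right correlation of w_H: there exists f : R → ℚ such that ∑_{r ∈ R} w_H(rx)·f(r) = g(x) for all x ∈ R. -/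
/-!
A right-invariant `g` is constant on the generators of each principal right ideal `xR`: in a
finite ring `xR = yR` forces `y = xu` for a unit `u`. Indeed, if `y = xr` and `x = ys`, an
idempotent power `e` of `rs` fixes `x` and is equivalent to an idempotent `f`; counting, for every
principal right ideal, its generators killed by `e` and by `f` shows that `1 - e` and `1 - f` are
equivalent as well, and the two equivalences add up to a unit `u` with `eu = er`.

Hence there is `φ : R → ℚ` with `∑_{y ∈ xR} φ y = |xR| g x`, i.e. `∑_t φ (x t) = |R| g x`. For a
generating character `χ`, take `F` with `∑_r F r χ (r t) = φ t`. Since `[r x = 0]` is the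
average of `s ↦ χ (r x s)`, we get `∑_{r x = 0} F r = g x` and `∑_r F r = φ 0 = 0`, so `-F` is a
complex solution; a `ℚ`-linear retraction `ℂ → ℚ` makes it rational.
-/

open Finset

namespace FrobeniusRing

theorem sum_comp_addMonoidHom {G H M : Type*} [AddGroup G] [Fintype G] [AddGroup H]
    [DecidableEq H] [AddCommMonoid M] (ψ : G →+ H) (φ : H → M) :
    ∑ g, φ (ψ g) = #{g | ψ g = 0} • ∑ h ∈ univ.image ψ, φ h := by
  rw [sum_comp, smul_sum]
  refine sum_congr rfl fun h hh => ?_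
  obtain ⟨g, -, rfl⟩ := mem_image.1 hh
  rw [AddMonoidHom.card_fiber_eq_of_mem_range ψ ⟨g, rfl⟩ ⟨0, map_zero ψ⟩]

theorem card_ker_mul_card_image {G H : Type*} [AddGroup G] [Fintype G] [AddGroup H]
    [DecidableEq H] (ψ : G →+ H) :
    #{g | ψ g = 0} * #(univ.image ψ) = Fintype.card G := by
  have := sum_comp_addMonoidHom ψ fun _ => 1
  simp only [sum_const, smul_eq_mul, mul_one, card_univ] at this
  exact this.symm

theorem card_filter_eq_of_card_filter_le_eq {α β : Type*} [Fintype α] [DecidableEq β]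
    [PartialOrder β] [DecidableLE β] [WellFoundedLT β] (κ : α → β) (p q : α → Prop)
    [DecidablePred p] [DecidablePred q] (h : ∀ a, #{b | p b ∧ κ b ≤ κ a} = #{b | q b ∧ κ b ≤ κ a}) (a : α) :
    #{b | p b ∧ κ b = κ a} = #{b | q b ∧ κ b = κ a} := by
  suffices ∀ c a, κ a = c → #{b | p b ∧ κ b = c} = #{b | q b ∧ κ b = c} from this _ a rfl
  intro c
  induction c using WellFoundedLT.induction with
  | _ c ih =>
  rintro a rfl
  classical
  set T := (univ.filter fun b => κ b ≤ κ a).image κ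
  have hT : κ a ∈ T := mem_image_of_mem κ (by simp)
  have fiber (r : α → Prop) [DecidablePred r] :
      #{b | r b ∧ κ b ≤ κ a} = ∑ c ∈ T, #{b | r b ∧ κ b = c} := by
    rw [card_eq_sum_card_fiberwise (f := κ) (t := T) fun b hb => mem_image_of_mem κ (by simp_all)]
    refine sum_congr rfl fun c hc => congrArg card ?_
    obtain ⟨a', ha', rfl⟩ := mem_image.1 hc
    ext b
    simp only [mem_filter, mem_univ, true_and] at ha' ⊢
    exact ⟨fun h => ⟨h.1.1, h.2⟩, fun h => ⟨⟨h.1, h.2 ▸ ha'⟩, h.2⟩⟩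
  have lower : ∀ c ∈ T.erase (κ a), #{b | p b ∧ κ b = c} = #{b | q b ∧ κ b = c} := by
    intro c hc
    obtain ⟨hne, hc⟩ := mem_erase.1 hc
    obtain ⟨a', ha', rfl⟩ := mem_image.1 hc
    exact ih _ (lt_of_le_of_ne (by simpa using ha') hne) a' rfl
  have := h a
  rw [fiber p, fiber q, ← add_sum_erase T _ hT, ← add_sum_erase T _ hT,
    sum_congr rfl lower] at this
  omega

-- Treating the sets by decreasing size, each `S i` has a point of its own where `φ` is adjusted.
theorem exists_forall_sum_eq {ι β M : Type*} [DecidableEq ι] [DecidableEq β]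
    [AddCommGroup M] (S : ι → Finset β) (h : ι → M) (hS : ∀ i j, S i = S j → h i = h j)
    (hpriv : ∀ i, ∃ p ∈ S i, ∀ j, p ∈ S j → S i ⊆ S j) (s : Finset ι) :
    ∃ φ : β → M, ∀ i ∈ s, ∑ b ∈ S i, φ b = h i := by
  induction s using Finset.induction_on_max_value (fun i => #(S i)) with
  | empty => exact ⟨0, by simp⟩
  | insert a s _ hmax ih =>
    obtain ⟨φ, hφ⟩ := ih
    obtain ⟨p, hpa, hp⟩ := hpriv a
    set δ := h a - ∑ b ∈ S a, φ b
    have hδ : ∀ i ∈ s, p ∈ S i → δ = 0 := by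
      intro i hi hpi
      have hai : S a = S i := eq_of_subset_of_card_le (hp i hpi) (hmax i hi)
      rw [sub_eq_zero, hai, hφ i hi, hS a i hai]
    refine ⟨φ + Pi.single p δ, fun i hi => ?_⟩
    simp only [Pi.add_apply, sum_add_distrib, sum_pi_single']
    rcases mem_insert.1 hi with rfl | hi
    · simp [hpa, δ]
    · split_ifs with hpi
      · rw [hδ i hi hpi, add_zero, hφ i hi]
      · rw [add_zero, hφ i hi]

theorem exists_solution_of_exists_algebraMap_solution {K L ι κ : Type*} [Field K] [Ring L]
    [Nontrivial L] [Algebra K L] [Fintype ι] (A : κ → ι → K) (c : κ → K) (z : ι → L)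
    (hz : ∀ k, ∑ i, algebraMap K L (A k i) * z i = algebraMap K L (c k)) :
    ∃ q : ι → K, ∀ k, ∑ i, A k i * q i = c k := by
  obtain ⟨π, hπ⟩ := (Algebra.linearMap K L).exists_leftInverse_of_injective
    (LinearMap.ker_eq_bot.2 (algebraMap K L).injective)
  have hπ' (a : K) : π (algebraMap K L a) = a := LinearMap.congr_fun hπ a
  refine ⟨fun i => π (z i), fun k => ?_⟩
  rw [← hπ' (c k), ← hz k, map_sum]
  refine sum_congr rfl fun i _ => ?_
  rw [← smul_eq_mul, ← map_smul, Algebra.smul_def]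

theorem exists_isIdempotentElem_pow {M : Type*} [Monoid M] [Finite M] (a : M) :
    ∃ n ≠ 0, IsIdempotentElem (a ^ n) := by
  obtain ⟨i, j, hij, hpow⟩ := Finite.exists_ne_map_eq_of_infinite fun n : ℕ => a ^ n
  wlog hlt : i < j generalizing i j
  · exact this j i hij.symm hpow.symm (by omega)
  obtain ⟨p, rfl⟩ : ∃ p, j = i + (p + 1) := ⟨j - i - 1, by omega⟩
  have period (k m : ℕ) : a ^ (i + k + m * (p + 1)) = a ^ (i + k) := by
    induction m with
    | zero => simp
    | succ m ih =>
      rw [show i + k + (m + 1) * (p + 1) = i + (p + 1) + (k + m * (p + 1)) by ring, pow_add,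
        ← hpow, ← pow_add, ← add_assoc, ih]
  refine ⟨(i + 1) * (p + 1), by positivity, ?_⟩
  rw [IsIdempotentElem, ← pow_add]
  convert period (i * p + p + 1) (i + 1) using 2 <;> ring

theorem isIdempotentElem_mul_swap {M : Type*} [Semigroup M] {e a b : M} (hab : a * b = e) (hbe : b * e = b) :
    IsIdempotentElem (b * a) := by
  rw [IsIdempotentElem, mul_assoc, ← mul_assoc a, hab, ← mul_assoc, hbe]

section FiniteRing

variable {R : Type*} [Ring R] [Fintype R] [DecidableEq R]

def principalRightIdeal (x : R) : Finset R := univ.image (AddMonoidHom.mulLeft x)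

theorem mem_principalRightIdeal {x y : R} : y ∈ principalRightIdeal x ↔ ∃ t, x * t = y := by
  simp [principalRightIdeal]

theorem self_mem_principalRightIdeal (x : R) : x ∈ principalRightIdeal x :=
  mem_principalRightIdeal.2 ⟨1, mul_one x⟩

theorem principalRightIdeal_subset_iff {x y : R} :
    principalRightIdeal y ⊆ principalRightIdeal x ↔ y ∈ principalRightIdeal x := by
  refine ⟨fun h => h (self_mem_principalRightIdeal y), fun h z hz => ?_⟩
  obtain ⟨t, rfl⟩ := mem_principalRightIdeal.1 h
  obtain ⟨t', rfl⟩ := mem_principalRightIdeal.1 hz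
  exact mem_principalRightIdeal.2 ⟨t * t', (mul_assoc ..).symm⟩

theorem sum_mul_left_eq {M : Type*} [AddCommMonoid M] (x : R) (φ : R → M) :
    ∑ t, φ (x * t) = #{t | x * t = 0} • ∑ y ∈ principalRightIdeal x, φ y :=
  sum_comp_addMonoidHom (AddMonoidHom.mulLeft x) φ

theorem card_mul_card_principalRightIdeal (x : R) :
    #{t | x * t = 0} * #(principalRightIdeal x) = Fintype.card R :=
  card_ker_mul_card_image (AddMonoidHom.mulLeft x)

theorem card_filter_mul_mul_eq_zero {e a b : R} (he : IsIdempotentElem e) (hab : a * b = e)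
    (hea : e * a = a) (hbe : b * e = b) (z : R) :
    #{t | z * t * e = 0} = #{t | z * t * (b * a) = 0} := by
  have haba : a * (b * a) = a := by rw [← mul_assoc, hab, hea]
  have hbab : b * a * b = b := by rw [mul_assoc, hab, hbe]
  have hker (c : R) : #{t | z * t * c = 0} * #(univ.image fun t => z * t * c) = Fintype.card R :=
    card_ker_mul_card_image ((AddMonoidHom.mulRight c).comp (AddMonoidHom.mulLeft z))
  have himage : #(univ.image fun t => z * t * e) = #(univ.image fun t => z * t * (b * a)) := by
    refine card_nbij' (· * a) (· * b) ?_ ?_ ?_ ?_ <;> intro y hy <;>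
      obtain ⟨t, -, rfl⟩ := mem_image.1 hy
    · exact mem_image.2 ⟨t * a, mem_univ _, by simp only [mul_assoc, haba, hea]⟩
    · exact mem_image.2 ⟨t * b, mem_univ _, by simp only [mul_assoc, hbab, hbe]⟩
    · simp only [mul_assoc, hab, he.eq]
    · simp only [mul_assoc, hbab]
  have hpos : 0 < #(univ.image fun t => z * t * e) := by simp
  exact Nat.eq_of_mul_eq_mul_right hpos ((hker e).trans (himage ▸ hker (b * a)).symm)

theorem card_filter_mul_eq_zero_and_subset {e a b : R} (he : IsIdempotentElem e)
    (hab : a * b = e) (hea : e * a = a) (hbe : b * e = b) (z : R) :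
    #{y | y * e = 0 ∧ principalRightIdeal y ⊆ principalRightIdeal z} =
      #{y | y * (b * a) = 0 ∧ principalRightIdeal y ⊆ principalRightIdeal z} := by
  have count (c : R) : #{t | z * t * c = 0} =
      #{t | z * t = 0} * #{y | y * c = 0 ∧ principalRightIdeal y ⊆ principalRightIdeal z} := by
    have := sum_mul_left_eq z fun y => if y * c = 0 then 1 else 0
    rw [← card_filter, ← card_filter, smul_eq_mul] at this
    rw [this]
    congr 2
    ext y
    simp [principalRightIdeal_subset_iff, and_comm]
  have hpos : 0 < #{t | z * t = 0} := card_pos.2 ⟨0, by simp⟩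
  exact Nat.eq_of_mul_eq_mul_left hpos
    ((count e).symm.trans ((card_filter_mul_mul_eq_zero he hab hea hbe z).trans (count _)))

theorem exists_mul_eq_zero_principalRightIdeal_eq {e a b : R} (he : IsIdempotentElem e)
    (hab : a * b = e) (hea : e * a = a) (hbe : b * e = b) :
    ∃ w, w * e = 0 ∧ principalRightIdeal w = principalRightIdeal (1 - b * a) := by
  have hcount := card_filter_eq_of_card_filter_le_eq principalRightIdeal (· * e = 0)
    (· * (b * a) = 0) (card_filter_mul_eq_zero_and_subset he hab hea hbe) (1 - b * a)
  have hmem : 1 - b * a ∈ ({y | y * (b * a) = 0 ∧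
      principalRightIdeal y = principalRightIdeal (1 - b * a)} : Finset R) := by
    simp [(isIdempotentElem_mul_swap hab hbe).one_sub_mul_self]
  obtain ⟨w, hw⟩ := card_pos.1 (hcount ▸ card_pos.2 ⟨_, hmem⟩)
  exact ⟨w, by simpa using hw⟩

theorem card_filter_mul_left_eq_zero {e a b : R} (he : IsIdempotentElem e)
    (hab : a * b = e) (hea : e * a = a) (hbe : b * e = b) :
    #{z | e * z = 0} = #{z | b * a * z = 0} := by
  have hbab : b * a * b = b := by rw [mul_assoc, hab, hbe]
  have hker (c : R) : #{z | c * z = 0} * #(univ.image (c * ·)) = Fintype.card R :=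
    card_ker_mul_card_image (AddMonoidHom.mulLeft c)
  have himage : #(univ.image (e * ·)) = #(univ.image (b * a * ·)) := by
    refine card_nbij' (b * ·) (a * ·) ?_ ?_ ?_ ?_ <;> intro y hy <;>
      obtain ⟨t, -, rfl⟩ := mem_image.1 hy
    · exact mem_image.2 ⟨b * t, mem_univ _, by simp only [← mul_assoc, hbab, hbe]⟩
    · exact mem_image.2 ⟨a * t, mem_univ _, by simp only [← mul_assoc, hab, hea]⟩
    · simp only [← mul_assoc, hab, he.eq]
    · simp only [← mul_assoc, hbab]
  have hpos : 0 < #(univ.image (e * ·)) := by simp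
  exact Nat.eq_of_mul_eq_mul_right hpos ((hker e).trans (himage ▸ hker (b * a)).symm)

theorem exists_one_sub_equiv {e a b : R} (he : IsIdempotentElem e) (hab : a * b = e)
    (hea : e * a = a) (hbe : b * e = b) :
    ∃ v w : R, e * v = 0 ∧ w * e = 0 ∧ b * a * w = 0 ∧ w * v = 1 - b * a ∧ v * w = 1 - e := by
  have hf : IsIdempotentElem (b * a) := isIdempotentElem_mul_swap hab hbe
  obtain ⟨w, hwe, hw⟩ := exists_mul_eq_zero_principalRightIdeal_eq he hab hea hbe
  have hfw : b * a * w = 0 := by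
    obtain ⟨t, rfl⟩ := mem_principalRightIdeal.1 (hw ▸ self_mem_principalRightIdeal w)
    rw [← mul_assoc, hf.mul_one_sub_self, zero_mul]
  have hsurj : ∀ q, b * a * q = 0 → ∃ v, e * v = 0 ∧ w * v = q := by
    intro q hq
    have : q ∈ principalRightIdeal w :=
      hw ▸ mem_principalRightIdeal.2 ⟨q, by rw [sub_mul, one_mul, hq, sub_zero]⟩
    obtain ⟨t, ht⟩ := mem_principalRightIdeal.1 this
    exact ⟨t - e * t, by rw [mul_sub, ← mul_assoc, he.eq, sub_self],
      by rw [mul_sub, ← mul_assoc, hwe, zero_mul, sub_zero, ht]⟩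
  -- `w * ·` maps `{z | e * z = 0}` onto the equipotent `{z | b * a * z = 0}`
  have hinj : Set.InjOn (w * ·) ({z | e * z = 0} : Finset R) :=
    injOn_of_surjOn_of_card_le _
      (fun z _ => by
        simp only [coe_filter, mem_univ, true_and, Set.mem_ofPred_eq]
        rw [← mul_assoc, hfw, zero_mul])
      (fun q hq => by simpa [eq_comm] using hsurj q (by simpa using hq))
      (card_filter_mul_left_eq_zero he hab hea hbe).le
  obtain ⟨v, hev, hwv⟩ := hsurj (1 - b * a) hf.mul_one_sub_self
  refine ⟨v, w, hev, hwe, hfw, hwv, hinj (by simp [← mul_assoc, hev])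
    (by simp [he.mul_one_sub_self]) ?_⟩
  simp only [← mul_assoc, hwv, sub_mul, one_mul, hfw, mul_sub, mul_one, hwe, sub_zero]

theorem exists_unit_mul_eq {e a b : R} (he : IsIdempotentElem e) (hab : a * b = e)
    (hea : e * a = a) (hbe : b * e = b) : ∃ u : Rˣ, e * u = a := by
  obtain ⟨v, w, hev, hwe, hfw, hwv, hvw⟩ := exists_one_sub_equiv he hab hea hbe
  refine ⟨⟨a + v * (1 - b * a), b + w, ?_, ?_⟩, ?_⟩
  · have haw : a * w = 0 := by
      rw [← hea, ← hab, mul_assoc, mul_assoc, ← mul_assoc b, hfw, mul_zero]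
    have hfb : (1 - b * a) * b = 0 := by rw [sub_mul, one_mul, mul_assoc, hab, hbe, sub_self]
    have hfw' : (1 - b * a) * w = w := by rw [sub_mul, one_mul, hfw, sub_zero]
    rw [add_mul, mul_add, mul_add, hab, haw, mul_assoc, hfb, mul_zero, mul_assoc, hfw', hvw]
    abel
  · have hbv : b * v = 0 := by rw [← hbe, mul_assoc, hev, mul_zero]
    have hwa : w * a = 0 := by rw [← hea, ← mul_assoc, hwe, zero_mul]
    rw [add_mul, mul_add, mul_add, ← mul_assoc b, hbv, zero_mul, hwa, ← mul_assoc w, hwv,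
      (isIdempotentElem_mul_swap hab hbe).one_sub.eq]
    abel
  · change e * (a + v * (1 - b * a)) = a
    rw [mul_add, hea, ← mul_assoc, hev, zero_mul, add_zero]

theorem exists_unit_mul_eq_of_principalRightIdeal_eq {x y : R}
    (h : principalRightIdeal x = principalRightIdeal y) : ∃ u : Rˣ, x * u = y := by
  obtain ⟨r, hr⟩ := mem_principalRightIdeal.1 (h ▸ self_mem_principalRightIdeal y)
  obtain ⟨s, hs⟩ := mem_principalRightIdeal.1 (h.symm ▸ self_mem_principalRightIdeal x)
  have hx (k : ℕ) : x * (r * s) ^ k = x := by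
    induction k with
    | zero => rw [pow_zero, mul_one]
    | succ k ih => rw [pow_succ, ← mul_assoc, ih, ← mul_assoc, hr, hs]
  obtain ⟨N, hN, he⟩ := exists_isIdempotentElem_pow (r * s)
  have hab : (r * s) ^ N * r * (s * (r * s) ^ (N - 1) * (r * s) ^ N) = (r * s) ^ N := by
    rw [show (r * s) ^ N * r * (s * (r * s) ^ (N - 1) * (r * s) ^ N) =
      (r * s) ^ N * ((r * s) * (r * s) ^ (N - 1)) * (r * s) ^ N by simp only [mul_assoc],
      ← pow_succ', Nat.sub_add_cancel (Nat.one_le_iff_ne_zero.2 hN), he.eq, he.eq]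
  obtain ⟨u, hu⟩ := exists_unit_mul_eq he hab (by rw [← mul_assoc, he.eq])
    (by rw [mul_assoc, he.eq])
  exact ⟨u, by rw [← hx N, mul_assoc, hu, ← mul_assoc, hx, hr]⟩

end FiniteRing

section Frobenius

variable {R : Type*} [Ring R]

def IsGeneratingChar (χ : AddChar R ℂ) : Prop :=
  ∀ ψ : AddChar R ℂ, ∃! r : R, ∀ x, ψ x = χ (r * x)

variable {χ : AddChar R ℂ}

theorem IsGeneratingChar.eq_zero_of_forall_mul_left (hχ : IsGeneratingChar χ) {w : R}
    (hw : ∀ s, χ (w * s) = 1) : w = 0 :=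
  (hχ 1).unique (fun x => by rw [hw x, AddChar.one_apply])
    (fun x => by rw [zero_mul, AddChar.map_zero_eq_one, AddChar.one_apply])

variable [Fintype R]

theorem IsGeneratingChar.eq_zero_of_forall_mul_right (hχ : IsGeneratingChar χ) {w : R}
    (hw : ∀ r, χ (r * w) = 1) : w = 0 :=
  AddChar.forall_apply_eq_zero.1 fun ψ => by
    obtain ⟨r, hr, -⟩ := hχ ψ
    rw [hr, hw]

theorem IsGeneratingChar.sum_mul_left (hχ : IsGeneratingChar χ) [DecidableEq R] (w : R) :
    ∑ s, χ (w * s) = if w = 0 then (Fintype.card R : ℂ) else 0 := by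
  split_ifs with hw
  · simp [hw]
  · refine AddChar.sum_eq_zero_of_ne_one (ψ := χ.compAddMonoidHom (AddMonoidHom.mulLeft w)) ?_
    exact AddChar.ne_one_iff.2 (not_forall.1 fun h => hw (hχ.eq_zero_of_forall_mul_left h))

theorem IsGeneratingChar.sum_mul_right (hχ : IsGeneratingChar χ) [DecidableEq R] (w : R) :
    ∑ r, χ (r * w) = if w = 0 then (Fintype.card R : ℂ) else 0 := by
  split_ifs with hw
  · simp [hw]
  · refine AddChar.sum_eq_zero_of_ne_one (ψ := χ.compAddMonoidHom (AddMonoidHom.mulRight w)) ?_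
    exact AddChar.ne_one_iff.2 (not_forall.1 fun h => hw (hχ.eq_zero_of_forall_mul_right h))

theorem IsGeneratingChar.exists_sum_mul_eq (hχ : IsGeneratingChar χ) (φ : R → ℂ) :
    ∃ F : R → ℂ, ∀ t, ∑ r, F r * χ (r * t) = φ t := by
  classical
  have hn : (Fintype.card R : ℂ) ≠ 0 := Nat.cast_ne_zero.2 Fintype.card_ne_zero
  refine ⟨fun r => (Fintype.card R : ℂ)⁻¹ * ∑ y, φ y * χ (-(r * y)), fun t => ?_⟩
  calc ∑ r, (Fintype.card R : ℂ)⁻¹ * (∑ y, φ y * χ (-(r * y))) * χ (r * t)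
      = (Fintype.card R : ℂ)⁻¹ * ∑ y, φ y * ∑ r, χ (r * (t - y)) := by
        simp only [mul_sum, sum_mul]
        rw [sum_comm]
        refine sum_congr rfl fun y _ => sum_congr rfl fun r _ => ?_
        rw [mul_sub, sub_eq_neg_add, AddChar.map_add_eq_mul]
        ring
    _ = φ t := by
        simp only [hχ.sum_mul_right, sub_eq_zero, mul_ite, mul_zero, sum_ite_eq, mem_univ,
          if_true]
        field_simp

theorem IsGeneratingChar.exists_correlation_eq (hχ : IsGeneratingChar χ) [DecidableEq R]
    (φ g : R → ℂ) (hφ : ∀ x, ∑ t, φ (x * t) = Fintype.card R * g x) (hg0 : g 0 = 0) :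
    ∃ F : R → ℂ, ∀ x, ∑ r, (if r * x = 0 then (0 : ℂ) else 1) * F r = g x := by
  have hn : (Fintype.card R : ℂ) ≠ 0 := Nat.cast_ne_zero.2 Fintype.card_ne_zero
  obtain ⟨F, hF⟩ := hχ.exists_sum_mul_eq φ
  have hφ0 : φ 0 = 0 := by simpa [hg0, hn] using hφ 0
  have htotal : ∑ r, F r = 0 := by simpa [hφ0] using hF 0
  -- `[r * x = 0]` is the average of `s ↦ χ (r * x * s)`
  have hann (x : R) : ∑ r, (if r * x = 0 then (1 : ℂ) else 0) * F r = g x := by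
    calc ∑ r, (if r * x = 0 then (1 : ℂ) else 0) * F r
        = (Fintype.card R : ℂ)⁻¹ * ∑ s, ∑ r, F r * χ (r * (x * s)) := by
          rw [sum_comm, mul_sum]
          refine sum_congr rfl fun r _ => ?_
          simp_rw [← mul_assoc r x, ← mul_sum, hχ.sum_mul_left]
          split_ifs
          · field_simp
          · simp
      _ = g x := by
          rw [sum_congr rfl fun s _ => hF (x * s), hφ, ← mul_assoc, inv_mul_cancel₀ hn,
            one_mul]
  refine ⟨fun r => -F r, fun x => ?_⟩
  have split (r : R) : (if r * x = 0 then (0 : ℂ) else 1) * -F r =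
      (if r * x = 0 then (1 : ℂ) else 0) * F r - F r := by
    split_ifs <;> ring
  rw [sum_congr rfl fun r _ => split r, sum_sub_distrib, hann, htotal, sub_zero]

end Frobenius

end FrobeniusRing

open FrobeniusRing in
/-- over a finite Frobenius ring, every right-invariant function
`g : R → ℚ` with `g 0 = 0` is a right correlation of the Hamming weight:
there is `f : R → ℚ` with `∑_{r ∈ R} w_H(rx)·f(r) = g(x)` for all `x`. -/
theorem stmt19 (R : Type) [Ring R] [Fintype R] [DecidableEq R]
    (hFrob : IsFrobenius R) (g : R → ℚ) (hg0 : g 0 = 0)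
    (hginv : ∀ (x : R) (u : Rˣ), g (x * (u : R)) = g x) :
    ∃ f : R → ℚ, ∀ x : R,
      (∑ r : R, (if r * x = 0 then (0 : ℚ) else 1) * f r) = g x := by
  obtain ⟨χ, hχ⟩ := hFrob
  have hclass (x y : R) (h : principalRightIdeal x = principalRightIdeal y) : g x = g y := by
    obtain ⟨u, rfl⟩ := exists_unit_mul_eq_of_principalRightIdeal_eq h
    exact (hginv x u).symm
  obtain ⟨φ, hφ⟩ := exists_forall_sum_eq principalRightIdeal
    (fun x => (#(principalRightIdeal x) : ℚ) * g x) (fun x y h => by rw [h, hclass x y h])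
    (fun x => ⟨x, self_mem_principalRightIdeal x,
      fun y hy => principalRightIdeal_subset_iff.2 hy⟩) univ
  have hφR (x : R) : ∑ t, φ (x * t) = Fintype.card R * g x := by
    rw [sum_mul_left_eq, hφ x (mem_univ x), nsmul_eq_mul, ← mul_assoc, ← Nat.cast_mul,
      card_mul_card_principalRightIdeal]
  obtain ⟨F, hF⟩ := IsGeneratingChar.exists_correlation_eq hχ (fun y => (φ y : ℂ))
    (fun x => (g x : ℂ)) (fun x => by exact_mod_cast hφR x) (by simp [hg0])
  exact exists_solution_of_exists_algebraMap_solution (L := ℂ) _ g F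
    (by simpa [apply_ite] using hF)
end
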